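/- arXiv:1402.2801 — 6 statements merged into one kernel-verified Lean document; each statement's English description precedes it below -/
import Mathlib

section
/- Fix an n-player repeated game with discount factor δ ∈ [0,1), a stage game with finite action sets A_i and payoffs u_i : ∏_j A_j → [0,1], and a public monitoring structure whose signal distributions satisfy (ε,γ)-differential privacy. Let σ = (σ_1,…,σ_n) be a perfect public equilibrium of the repeated game. Then for every public history h^t, the profile of mixed stage-game actions (σ_1(h^t),…,σ_n(h^t)) prescribed at that history forms an η-approximate Nash equilibrium of the stage game, where η = (δ/(1−δ))·(ε+γ). -/
/-!
Let player `i` deviate once: play `b` at `h` and follow `σ i` everywhere else. Today this gains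
`u_i(b, α₋ᵢ) - u_i(α)`; from tomorrow on play is as under `σ`, so the deviation only changes the
distribution of today's signal. Each later period's expected payoff is the average over that
signal of a `[0,1]`-valued quantity, and differential privacy moves such an average by at most
`ε + γ`: on the event `E` where the signal is likelier under `a` than under `a' = (b, a₋ᵢ)`,
`P_a(E) - P_{a'}(E) ≤ (1 - e^{-ε}) P_a(E) + γ ≤ ε + γ`. The discounted loss from period one on is
therefore at most `δ / (1 - δ) · (ε + γ)`, and since `σ` is a PPE the deviation is unprofitable.
-/

open scoped BigOperators

section RepeatedGame

variable {n : ℕ} {A : Fin n → Type*} [∀ i, Fintype (A i)] [∀ i, DecidableEq (A i)]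
variable {S : Type*} [Fintype S]

/-- Expected payoff of a profile of mixed actions in the stage game. -/
noncomputable def expPay (u : (∀ j, A j) → ℝ) (α : ∀ i, A i → ℝ) : ℝ :=
  ∑ a : ∀ j, A j, (∏ j, α j (a j)) * u a

/-- The pure (point-mass) mixed action on `b`. -/
def pureAct (i : Fin n) (b : A i) : A i → ℝ := fun a => if a = b then 1 else 0

/-- `α` is a profile of mixed actions: nonnegative weights summing to one. -/
def IsMixedProfile (α : ∀ i, A i → ℝ) : Prop :=
  (∀ i a, 0 ≤ α i a) ∧ ∀ i, ∑ a, α i a = 1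

/-- An `η`-approximate Nash equilibrium of the stage game: no player can gain more than
`η` by a unilateral deviation to any pure action. -/
def ApproxNash (η : ℝ) (u : ∀ i : Fin n, (∀ j, A j) → ℝ) (α : ∀ i, A i → ℝ) : Prop :=
  ∀ (i : Fin n) (b : A i),
    expPay (u i) α ≥ expPay (u i) (Function.update α i (pureAct i b)) - η

/-- `(ε,γ)`-differential privacy of a public monitoring structure `P`: for every player
`i`, every pair of action profiles differing only in player `i`'s action, and every
event `E ⊆ S`, `exp(-ε)·P_{a'}(E) - γ ≤ P_a(E) ≤ exp(ε)·P_{a'}(E) + γ`. -/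
def PubDP (ε γ : ℝ) (P : (∀ j, A j) → S → ℝ) : Prop :=
  ∀ (a : ∀ j, A j) (i : Fin n) (b : A i) (E : Finset S),
    Real.exp (-ε) * (∑ s ∈ E, P (Function.update a i b) s) - γ ≤ ∑ s ∈ E, P a s ∧
    ∑ s ∈ E, P a s ≤ Real.exp ε * (∑ s ∈ E, P (Function.update a i b) s) + γ

/-- Probability that the public signal `s` is realized when the mixed profile `α` is
played. -/
noncomputable def sigProb (P : (∀ j, A j) → S → ℝ) (α : ∀ i, A i → ℝ) (s : S) : ℝ :=
  ∑ a : ∀ j, A j, (∏ j, α j (a j)) * P a s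

/-- `EU u P σ t h` is the expected stage payoff (w.r.t. `u`) obtained `t` periods after
the public history `h`, when players follow the public strategy profile `σ`. -/
noncomputable def EU (u : (∀ j, A j) → ℝ) (P : (∀ j, A j) → S → ℝ)
    (σ : ∀ i : Fin n, List S → A i → ℝ) : ℕ → List S → ℝ
  | 0, h => expPay u fun i => σ i h
  | t + 1, h => ∑ s : S, sigProb P (fun i => σ i h) s * EU u P σ t (h ++ [s])

/-- The normalized discounted continuation value from public history `h` under the
public strategy profile `σ`. -/
noncomputable def V (δ : ℝ) (u : (∀ j, A j) → ℝ) (P : (∀ j, A j) → S → ℝ)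
    (σ : ∀ i : Fin n, List S → A i → ℝ) (h : List S) : ℝ :=
  (1 - δ) * ∑' t : ℕ, δ ^ t * EU u P σ t h

/-- A public strategy for one player: a map from public histories to mixed actions. -/
def IsPubStrategy {i : Fin n} (σi : List S → A i → ℝ) : Prop :=
  ∀ h : List S, (∀ a, 0 ≤ σi h a) ∧ ∑ a, σi h a = 1

/-- A perfect public equilibrium: a profile of public strategies such that, at every
public history, no player can increase his normalized discounted continuation value by
deviating to another (public) strategy. -/
def IsPPE (δ : ℝ) (u : ∀ i : Fin n, (∀ j, A j) → ℝ) (P : (∀ j, A j) → S → ℝ)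
    (σ : ∀ i : Fin n, List S → A i → ℝ) : Prop :=
  (∀ i, IsPubStrategy (σ i)) ∧
  ∀ (h : List S) (i : Fin n) (σi' : List S → A i → ℝ), IsPubStrategy σi' →
    V δ (u i) P (Function.update σ i σi') h ≤ V δ (u i) P σ h

end RepeatedGame

open Finset Function

theorem sum_mul_mem_Icc {ι : Type*} [Fintype ι] {p W : ι → ℝ} (hp0 : ∀ x, 0 ≤ p x)
    (hp1 : ∑ x, p x = 1) (hW : ∀ x, W x ∈ Set.Icc (0 : ℝ) 1) :
    ∑ x, p x * W x ∈ Set.Icc (0 : ℝ) 1 :=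
  ⟨sum_nonneg fun x _ => mul_nonneg (hp0 x) (hW x).1,
    hp1 ▸ sum_le_sum fun x _ => mul_le_of_le_one_right (hp0 x) (hW x).2⟩

theorem exists_sum_sub_mul_le_sum_sub {ι : Type*} [Fintype ι] (p q : ι → ℝ) {W : ι → ℝ}
    (hW : ∀ x, W x ∈ Set.Icc (0 : ℝ) 1) :
    ∃ E : Finset ι, ∑ x, (p x - q x) * W x ≤ ∑ x ∈ E, (p x - q x) := by
  refine ⟨univ.filter fun x => q x ≤ p x, ?_⟩
  rw [sum_filter]
  refine sum_le_sum fun x _ => ?_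
  split_ifs with hx
  · exact mul_le_of_le_one_right (sub_nonneg.2 hx) (hW x).2
  · exact mul_nonpos_of_nonpos_of_nonneg (by linarith [not_le.1 hx]) (hW x).1

theorem sub_le_add_of_exp_neg_mul_sub_le {ε γ x y : ℝ} (hε : 0 ≤ ε) (hx0 : 0 ≤ x)
    (hx1 : x ≤ 1) (h : Real.exp (-ε) * x - γ ≤ y) : x - y ≤ ε + γ := by
  nlinarith [Real.add_one_le_exp (-ε)]

theorem pow_mul_summable_of_mem_Icc {δ : ℝ} (hδ0 : 0 ≤ δ) (hδ1 : δ < 1) {f : ℕ → ℝ}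
    (hf : ∀ t, f t ∈ Set.Icc (0 : ℝ) 1) : Summable fun t => δ ^ t * f t :=
  (summable_geometric_of_lt_one hδ0 hδ1).of_nonneg_of_le
    (fun t => mul_nonneg (pow_nonneg hδ0 t) (hf t).1)
    (fun t => mul_le_of_le_one_right (pow_nonneg hδ0 t) (hf t).2)

theorem sub_head_le_of_tsum_pow_mul_le {δ c : ℝ} (hδ0 : 0 ≤ δ) (hδ1 : δ < 1) {f g : ℕ → ℝ}
    (hf : ∀ t, f t ∈ Set.Icc (0 : ℝ) 1) (hg : ∀ t, g t ∈ Set.Icc (0 : ℝ) 1)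
    (hle : ∑' t, δ ^ t * f t ≤ ∑' t, δ ^ t * g t) (hc : ∀ t, g (t + 1) - f (t + 1) ≤ c) :
    f 0 - g 0 ≤ δ / (1 - δ) * c := by
  have hsum : Summable fun t => δ ^ t * (g t - f t) := by
    simpa only [mul_sub] using
      (pow_mul_summable_of_mem_Icc hδ0 hδ1 hg).sub (pow_mul_summable_of_mem_Icc hδ0 hδ1 hf)
  have hgeom : Summable fun t => δ ^ (t + 1) * c :=
    (summable_nat_add_iff 1).2 ((summable_geometric_of_lt_one hδ0 hδ1).mul_right c)
  have htail : ∑' t, δ ^ (t + 1) * (g (t + 1) - f (t + 1)) ≤ δ / (1 - δ) * c :=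
    calc ∑' t, δ ^ (t + 1) * (g (t + 1) - f (t + 1))
        ≤ ∑' t, δ ^ (t + 1) * c :=
          Summable.tsum_le_tsum (fun t => mul_le_mul_of_nonneg_left (hc t) (pow_nonneg hδ0 _))
            ((summable_nat_add_iff 1).2 hsum) hgeom
      _ = δ / (1 - δ) * c := by
          simp_rw [pow_succ, mul_comm _ δ, mul_assoc, tsum_mul_left, tsum_mul_right,
            tsum_geometric_of_lt_one hδ0 hδ1]
          ring
  have hnonneg : 0 ≤ ∑' t, δ ^ t * (g t - f t) := by
    simp_rw [mul_sub]
    rw [Summable.tsum_sub (pow_mul_summable_of_mem_Icc hδ0 hδ1 hg)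
      (pow_mul_summable_of_mem_Icc hδ0 hδ1 hf)]
    linarith
  rw [hsum.tsum_eq_zero_add, pow_zero, one_mul] at hnonneg
  linarith

section RepeatedGame

variable {n : ℕ} {A : Fin n → Type*} {S : Type*}

theorem pureAct_nonneg [∀ i, DecidableEq (A i)] (i : Fin n) (b x : A i) :
    0 ≤ pureAct i b x := by
  unfold pureAct; split_ifs <;> norm_num

theorem PubDP.sum_sub_mul_le [∀ i, DecidableEq (A i)] [Fintype S] {P : (∀ j, A j) → S → ℝ}
    {ε γ : ℝ} (hDP : PubDP ε γ P)
    (hε : 0 ≤ ε) (hP0 : ∀ a s, 0 ≤ P a s) (hP1 : ∀ a, ∑ s, P a s = 1) (a : ∀ j, A j)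
    (i : Fin n) (b : A i) {W : S → ℝ} (hW : ∀ s, W s ∈ Set.Icc (0 : ℝ) 1) :
    ∑ s, (P a s - P (update a i b) s) * W s ≤ ε + γ := by
  obtain ⟨E, hE⟩ := exists_sum_sub_mul_le_sum_sub (P a) (P (update a i b)) hW
  have hDPE := (hDP (update a i b) i (a i) E).1
  rw [update_idem, update_eq_self] at hDPE
  have hPE : ∑ s ∈ E, P a s ≤ 1 := hP1 a ▸ sum_le_univ_sum_of_nonneg (hP0 a)
  rw [sum_sub_distrib] at hE
  exact hE.trans (sub_le_add_of_exp_neg_mul_sub_le hε (sum_nonneg fun s _ => hP0 a s) hPE hDPE)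

theorem update_update_apply_self [DecidableEq S] (σ : ∀ i : Fin n, List S → A i → ℝ)
    (i : Fin n) (h : List S) (β : A i → ℝ) :
    (fun j => update σ i (update (σ i) h β) j h) = update (fun j => σ j h) i β := by
  funext j
  simpa using apply_update (fun (k : Fin n) (τ : List S → A k → ℝ) => τ h) σ i
    (update (σ i) h β) j

variable [∀ i, Fintype (A i)]

theorem sum_pureAct_mul [∀ i, DecidableEq (A i)] (i : Fin n) (b : A i) (f : A i → ℝ) :
    ∑ x, pureAct i b x * f x = f b := by
  simp [pureAct, ite_mul]

theorem sum_pureAct [∀ i, DecidableEq (A i)] (i : Fin n) (b : A i) :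
    ∑ x, pureAct i b x = 1 := by
  simpa using sum_pureAct_mul i b 1

theorem IsMixedProfile.prod_nonneg {α : ∀ i, A i → ℝ} (hα : IsMixedProfile α)
    (a : ∀ j, A j) : 0 ≤ ∏ j, α j (a j) :=
  Finset.prod_nonneg fun j _ => hα.1 j (a j)

theorem IsMixedProfile.sum_prod {α : ∀ i, A i → ℝ} (hα : IsMixedProfile α) :
    ∑ a : ∀ j, A j, ∏ j, α j (a j) = 1 := by
  classical
  rw [← Fintype.prod_sum]
  simp [hα.2]

theorem IsMixedProfile.expPay_mem_Icc {u : (∀ j, A j) → ℝ}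
    (hu : ∀ a, u a ∈ Set.Icc (0 : ℝ) 1) {α : ∀ i, A i → ℝ} (hα : IsMixedProfile α) :
    expPay u α ∈ Set.Icc (0 : ℝ) 1 :=
  sum_mul_mem_Icc hα.prod_nonneg hα.sum_prod hu

theorem sum_prod_mul_eq_sum_piSplitAt (α : ∀ i, A i → ℝ) (i : Fin n)
    (g : (∀ j, A j) → ℝ) :
    ∑ a : ∀ j, A j, (∏ j, α j (a j)) * g a =
      ∑ x : A i, ∑ r : ∀ j : {j // j ≠ i}, A j,
        α i x * ((∏ j : {j // j ≠ i}, α j (r j)) * g ((Equiv.piSplitAt i A).symm (x, r))) := by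
  rw [← (Equiv.piSplitAt i A).symm.sum_comp, Fintype.sum_prod_type]
  refine sum_congr rfl fun x _ => sum_congr rfl fun r _ => ?_
  rw [Fintype.prod_eq_mul_prod_subtype_ne _ i, mul_assoc]
  congr 2
  · simp [Equiv.piSplitAt_symm_apply]
  · exact prod_congr rfl fun j _ => by simp [Equiv.piSplitAt_symm_apply, j.2]

theorem sum_prod_mul_update_pureAct [∀ i, DecidableEq (A i)] {α : ∀ i, A i → ℝ}
    (hα : IsMixedProfile α) (i : Fin n) (b : A i) (g : (∀ j, A j) → ℝ) :
    ∑ a : ∀ j, A j, (∏ j, α j (a j)) * g (update a i b) =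
      ∑ a : ∀ j, A j, (∏ j, update α i (pureAct i b) j (a j)) * g a := by
  have hsplit : ∀ (x : A i) (r : ∀ j : {j // j ≠ i}, A j),
      update ((Equiv.piSplitAt i A).symm (x, r)) i b = (Equiv.piSplitAt i A).symm (b, r) := by
    intro x r
    funext j
    rcases eq_or_ne j i with rfl | hj <;> simp [Equiv.piSplitAt_symm_apply, *]
  rw [sum_prod_mul_eq_sum_piSplitAt _ i, sum_prod_mul_eq_sum_piSplitAt _ i]
  simp_rw [hsplit, ← mul_sum, ← sum_mul, hα.2 i, one_mul, update_self, sum_pureAct_mul]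
  refine sum_congr rfl fun r _ => ?_
  congr 1
  exact prod_congr rfl fun j _ => by rw [update_of_ne j.2]

theorem IsPubStrategy.isMixedProfile {σ : ∀ i : Fin n, List S → A i → ℝ}
    (hσ : ∀ i, IsPubStrategy (σ i)) (h : List S) : IsMixedProfile fun i => σ i h :=
  ⟨fun i => (hσ i h).1, fun i => (hσ i h).2⟩

theorem IsPubStrategy.update [DecidableEq S] {i : Fin n} {σi : List S → A i → ℝ}
    (hσi : IsPubStrategy σi) (h : List S) {β : A i → ℝ} (hβ0 : ∀ x, 0 ≤ β x)
    (hβ1 : ∑ x, β x = 1) : IsPubStrategy (Function.update σi h β) := by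
  intro h'
  rcases eq_or_ne h' h with rfl | hne
  · simpa using ⟨hβ0, hβ1⟩
  · simpa [update_of_ne hne] using hσi h'

variable {P : (∀ j, A j) → S → ℝ}

theorem sigProb_nonneg (hP0 : ∀ a s, 0 ≤ P a s) {α : ∀ i, A i → ℝ}
    (hα : IsMixedProfile α) (s : S) : 0 ≤ sigProb P α s :=
  sum_nonneg fun a _ => mul_nonneg (hα.prod_nonneg a) (hP0 a s)

variable [Fintype S]

theorem sum_sigProb (hP1 : ∀ a, ∑ s, P a s = 1) {α : ∀ i, A i → ℝ}
    (hα : IsMixedProfile α) : ∑ s, sigProb P α s = 1 := by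
  simp_rw [sigProb, Finset.sum_comm (γ := S), ← Finset.mul_sum, hP1, mul_one]
  exact hα.sum_prod

theorem PubDP.sum_sigProb_sub_mul_le [∀ i, DecidableEq (A i)] {ε γ : ℝ} (hDP : PubDP ε γ P)
    (hε : 0 ≤ ε) (hP0 : ∀ a s, 0 ≤ P a s) (hP1 : ∀ a, ∑ s, P a s = 1) {α : ∀ i, A i → ℝ}
    (hα : IsMixedProfile α) (i : Fin n) (b : A i) {W : S → ℝ}
    (hW : ∀ s, W s ∈ Set.Icc (0 : ℝ) 1) :
    ∑ s, (sigProb P α s - sigProb P (update α i (pureAct i b)) s) * W s ≤ ε + γ := by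
  have hdiff : ∀ s, sigProb P α s - sigProb P (update α i (pureAct i b)) s =
      ∑ a, (∏ j, α j (a j)) * (P a s - P (update a i b) s) := fun s => by
    rw [sigProb, sigProb, ← sum_prod_mul_update_pureAct hα i b (P · s), ← sum_sub_distrib]
    simp_rw [mul_sub]
  calc ∑ s, (sigProb P α s - sigProb P (update α i (pureAct i b)) s) * W s
      = ∑ a, (∏ j, α j (a j)) * ∑ s, (P a s - P (update a i b) s) * W s := by
        simp_rw [hdiff, sum_mul, mul_sum, mul_assoc]
        exact sum_comm
    _ ≤ ∑ a, (∏ j, α j (a j)) * (ε + γ) :=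
        sum_le_sum fun a _ => mul_le_mul_of_nonneg_left
          (hDP.sum_sub_mul_le hε hP0 hP1 a i b hW) (hα.prod_nonneg a)
    _ = ε + γ := by rw [← sum_mul, hα.sum_prod, one_mul]

theorem EU_mem_Icc {u : (∀ j, A j) → ℝ} (hu : ∀ a, u a ∈ Set.Icc (0 : ℝ) 1)
    (hP0 : ∀ a s, 0 ≤ P a s) (hP1 : ∀ a, ∑ s, P a s = 1)
    {σ : ∀ i : Fin n, List S → A i → ℝ} (hσ : ∀ i, IsPubStrategy (σ i)) :
    ∀ (t : ℕ) (h : List S), EU u P σ t h ∈ Set.Icc (0 : ℝ) 1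
  | 0, h => (IsPubStrategy.isMixedProfile hσ h).expPay_mem_Icc hu
  | t + 1, h =>
    have hα := IsPubStrategy.isMixedProfile hσ h
    sum_mul_mem_Icc (sigProb_nonneg hP0 hα) (sum_sigProb hP1 hα)
      fun s => EU_mem_Icc hu hP0 hP1 hσ t (h ++ [s])

theorem EU_congr {u : (∀ j, A j) → ℝ} {σ σ' : ∀ i : Fin n, List S → A i → ℝ} :
    ∀ (t : ℕ) (h : List S), (∀ h', h <+: h' → ∀ j, σ' j h' = σ j h') →
      EU u P σ' t h = EU u P σ t h
  | 0, h, hσ => by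
    simp only [EU, hσ h List.prefix_rfl]
  | t + 1, h, hσ => by
    simp only [EU, hσ h List.prefix_rfl]
    refine sum_congr rfl fun s _ => congrArg _ (EU_congr t _ fun h' hh' => ?_)
    exact hσ h' ((List.prefix_append h [s]).trans hh')

section OneShotDeviation

/- `update σ i (update (σ i) h β)` is the one-shot deviation of player `i`: `β` at `h`, `σ i`
everywhere else. -/
variable [DecidableEq S] (u : (∀ j, A j) → ℝ) (σ : ∀ i : Fin n, List S → A i → ℝ)
  (i : Fin n) (h : List S) (β : A i → ℝ)

theorem EU_update_update_zero :
    EU u P (update σ i (update (σ i) h β)) 0 h = expPay u (update (fun j => σ j h) i β) := by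
  rw [EU, update_update_apply_self]

theorem EU_update_update_succ (t : ℕ) :
    EU u P (update σ i (update (σ i) h β)) (t + 1) h =
      ∑ s, sigProb P (update (fun j => σ j h) i β) s * EU u P σ t (h ++ [s]) := by
  rw [EU, update_update_apply_self]
  refine sum_congr rfl fun s _ => congrArg _ (EU_congr t _ fun h' hh' j => ?_)
  rcases eq_or_ne j i with rfl | hj
  · have hne : h' ≠ h := by
      rintro rfl
      simpa using hh'.length_le
    rw [update_self, update_of_ne hne]
  · rw [update_of_ne hj]

end OneShotDeviation

end RepeatedGame

theorem ppe_approx_stage_nash_general {n : ℕ} {A : Fin n → Type*}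
    [∀ i, Fintype (A i)] [∀ i, DecidableEq (A i)] {S : Type*} [Fintype S]
    (δ : ℝ) (hδ0 : 0 ≤ δ) (hδ1 : δ < 1)
    (u : ∀ i : Fin n, (∀ j, A j) → ℝ) (hu : ∀ i a, u i a ∈ Set.Icc (0 : ℝ) 1)
    (P : (∀ j, A j) → S → ℝ)
    (hP0 : ∀ a s, 0 ≤ P a s) (hP1 : ∀ a, ∑ s, P a s = 1)
    (ε γ : ℝ) (hε : 0 ≤ ε) (hDP : PubDP ε γ P)
    (σ : ∀ i : Fin n, List S → A i → ℝ) (hσ : IsPPE δ u P σ)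
    (h : List S) :
    ApproxNash (δ / (1 - δ) * (ε + γ)) u (fun i => σ i h) := by
  classical
  intro i b
  obtain ⟨hσpub, hσopt⟩ := hσ
  have hdev := (hσpub i).update h (pureAct_nonneg i b) (sum_pureAct i b)
  set σ' := update σ i (update (σ i) h (pureAct i b))
  have hσ'pub : ∀ j, IsPubStrategy (σ' j) := by
    intro j
    rcases eq_or_ne j i with rfl | hj
    · simpa [σ'] using hdev
    · simpa [σ', update_of_ne hj] using hσpub j
  have hV : ∑' t, δ ^ t * EU (u i) P σ' t h ≤ ∑' t, δ ^ t * EU (u i) P σ t h :=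
    le_of_mul_le_mul_left (hσopt h i _ hdev) (sub_pos.2 hδ1)
  have hstep : ∀ t, EU (u i) P σ (t + 1) h - EU (u i) P σ' (t + 1) h ≤ ε + γ := fun t => by
    rw [EU_update_update_succ, EU, ← sum_sub_distrib]
    simp_rw [← sub_mul]
    exact hDP.sum_sigProb_sub_mul_le hε hP0 hP1 (IsPubStrategy.isMixedProfile hσpub h) i b
      fun s => EU_mem_Icc (hu i) hP0 hP1 hσpub t _
  have hgain := sub_head_le_of_tsum_pow_mul_le hδ0 hδ1 (EU_mem_Icc (hu i) hP0 hP1 hσ'pub · h)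
    (EU_mem_Icc (hu i) hP0 hP1 hσpub · h) hV hstep
  rw [EU_update_update_zero, EU] at hgain
  exact sub_le_comm.1 hgain

/-- **Anti-folk theorem for perfect public equilibria (Theorem 1 of the paper).**
Fix a repeated game with discount factor `δ ∈ [0,1)`, stage payoffs in `[0,1]`, and a
public monitoring structure satisfying `(ε,γ)`-differential privacy.  If `σ` is a
perfect public equilibrium, then at every public history `h` the prescribed profile of
mixed actions `(σ₁(h),…,σₙ(h))` is an `η`-approximate Nash equilibrium of the stage
game, with `η = (δ/(1-δ))·(ε+γ)`. -/
theorem ppe_approx_stage_nash {n : ℕ} {A : Fin n → Type*}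
    [∀ i, Fintype (A i)] [∀ i, DecidableEq (A i)] {S : Type*} [Fintype S]
    (δ : ℝ) (hδ0 : 0 ≤ δ) (hδ1 : δ < 1)
    (u : ∀ i : Fin n, (∀ j, A j) → ℝ) (hu : ∀ i a, u i a ∈ Set.Icc (0 : ℝ) 1)
    (P : (∀ j, A j) → S → ℝ)
    (hP0 : ∀ a s, 0 ≤ P a s) (hP1 : ∀ a, ∑ s, P a s = 1)
    (ε γ : ℝ) (hε : 0 ≤ ε) (hγ : 0 ≤ γ) (hDP : PubDP ε γ P)
    (σ : ∀ i : Fin n, List S → A i → ℝ) (hσ : IsPPE δ u P σ)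
    (h : List S) :
    ApproxNash (δ / (1 - δ) * (ε + γ)) u (fun i => σ i h) :=
  ppe_approx_stage_nash_general δ hδ0 hδ1 u hu P hP0 hP1 ε γ hε hDP σ hσ h
end

section
/- Fix an n-player repeated game with discount factor δ ∈ [0,1), a stage game with finite action sets A_i and payoffs u_i : ∏_j A_j → [0,1], and a private monitoring structure whose joint signal distributions satisfy (ε,γ)-differential privacy and which has no observable deviations. Let σ = (σ_1,…,σ_n) be a sequential equilibrium of the repeated game. Then for every vector of private histories (h_1^t,…,h_n^t) that occurs with positive probability when players play according to σ, the distribution on period-t action profiles (σ_1(h_1^t),…,σ_n(h_n^t)) — with players' private histories serving as the correlating signals — forms an η-approximate correlated equilibrium of the stage game, where η = (δ/(1−δ))·(ε+γ). -/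
open scoped BigOperators

section RepeatedGame

variable {n : ℕ} {A : Fin n → Type*} [∀ i, Fintype (A i)] [∀ i, DecidableEq (A i)]
variable {S : Type*} [Fintype S] [DecidableEq S]

/-- `(ε,γ)`-differential privacy of a private monitoring structure `P`, a distribution
over vectors of private signals: for every player `i`, every pair of action profiles
differing only in player `i`'s action, and every event `E ⊆ S^n`,
`exp(-ε)·P_{a'}(E) - γ ≤ P_a(E) ≤ exp(ε)·P_{a'}(E) + γ`. -/
def PrivDP (ε γ : ℝ) (P : (∀ j, A j) → (Fin n → S) → ℝ) : Prop :=
  ∀ (a : ∀ j, A j) (i : Fin n) (b : A i) (E : Finset (Fin n → S)),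
    Real.exp (-ε) * (∑ sv ∈ E, P (Function.update a i b) sv) - γ ≤ ∑ sv ∈ E, P a sv ∧
    ∑ sv ∈ E, P a sv ≤ Real.exp ε * (∑ sv ∈ E, P (Function.update a i b) sv) + γ

/-- No observable deviations: the marginal probability of each private signal is
positive after every action profile. -/
def NoObsDevPriv (P : (∀ j, A j) → (Fin n → S) → ℝ) : Prop :=
  ∀ (a : ∀ j, A j) (i : Fin n) (s : S),
    0 < ∑ sv : Fin n → S, (if sv i = s then P a sv else 0)

/-- An *outcome prefix* records, for each elapsed period, the realized vector of private
signals and the full action profile.  `privH i o` is player `i`'s private history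
extracted from the outcome prefix `o`: his own private signals and own past actions. -/
def privH (i : Fin n) (o : List ((Fin n → S) × (∀ j, A j))) : List (S × A i) :=
  o.map fun p => (p.1 i, p.2 i)

/-- `outProb P σ past o`: probability that the outcome continues as `o` after the
outcome prefix `past`, when each player `j` plays strategy `σ j`.
`outProb P σ [] o` is the probability of the outcome prefix `o`. -/
noncomputable def outProb (P : (∀ j, A j) → (Fin n → S) → ℝ)
    (σ : ∀ i : Fin n, List (S × A i) → A i → ℝ) :
    List ((Fin n → S) × (∀ j, A j)) → List ((Fin n → S) × (∀ j, A j)) → ℝ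
  | _, [] => 1
  | past, (sv, a) :: rest =>
      (∏ j, σ j (privH j past) (a j)) * P a sv * outProb P σ (past ++ [(sv, a)]) rest

/-- Indicator that the outcome matrix `m` (one signal-vector/action-profile pair per
period) is consistent with player `i`'s private history in the outcome prefix `o`. -/
noncomputable def consInd (i : Fin n) (o : List ((Fin n → S) × (∀ j, A j)))
    (m : Fin o.length → ((Fin n → S) × (∀ j, A j))) : ℝ :=
  if ∀ τ, (m τ).1 i = (o.get τ).1 i ∧ (m τ).2 i = (o.get τ).2 i then 1 else 0

/-- `EUW u P σ t o`: expected stage payoff `t` periods after the outcome prefix `o`. -/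
noncomputable def EUW (u : (∀ j, A j) → ℝ) (P : (∀ j, A j) → (Fin n → S) → ℝ)
    (σ : ∀ i : Fin n, List (S × A i) → A i → ℝ) :
    ℕ → List ((Fin n → S) × (∀ j, A j)) → ℝ
  | 0, o => ∑ a : ∀ j, A j, (∏ j, σ j (privH j o) (a j)) * u a
  | t + 1, o => ∑ a : ∀ j, A j, ∑ sv : Fin n → S,
      (∏ j, σ j (privH j o) (a j)) * P a sv * EUW u P σ t (o ++ [(sv, a)])

/-- Normalized discounted continuation value from the outcome prefix `o` under `σ`. -/
noncomputable def W (δ : ℝ) (u : (∀ j, A j) → ℝ) (P : (∀ j, A j) → (Fin n → S) → ℝ)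
    (σ : ∀ i : Fin n, List (S × A i) → A i → ℝ)
    (o : List ((Fin n → S) × (∀ j, A j))) : ℝ :=
  (1 - δ) * ∑' t : ℕ, δ ^ t * EUW u P σ t o

/-- A strategy for one player: a map from private histories to mixed actions. -/
def IsStrategy {i : Fin n} (σi : List (S × A i) → A i → ℝ) : Prop :=
  ∀ h : List (S × A i), (∀ a, 0 ≤ σi h a) ∧ ∑ a, σi h a = 1

/-- A sequential equilibrium: a profile of strategies together with a belief system `β`
(for each player `i` and each outcome prefix `o`, a distribution over outcome matrices
consistent with player `i`'s private history in `o`), such that beliefs are obtained by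
Bayes' rule at histories of positive probability, and at every private history every
player's continuation strategy is a best reply to the opponents' continuation strategies
given his beliefs.  (Beliefs at an outcome prefix `o` depend only on player `i`'s
private history `privH i o`, as required of the indicator `consInd`.) -/
def IsSeqEq (δ : ℝ) (u : ∀ i : Fin n, (∀ j, A j) → ℝ)
    (P : (∀ j, A j) → (Fin n → S) → ℝ)
    (σ : ∀ i : Fin n, List (S × A i) → A i → ℝ) : Prop :=
  (∀ i, IsStrategy (σ i)) ∧
  ∃ β : ∀ (i : Fin n) (o : List ((Fin n → S) × (∀ j, A j))),
      (Fin o.length → ((Fin n → S) × (∀ j, A j))) → ℝ,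
    (∀ i o m, 0 ≤ β i o m) ∧
    (∀ (i : Fin n) (o : List ((Fin n → S) × (∀ j, A j)))
        (m : Fin o.length → ((Fin n → S) × (∀ j, A j))),
        consInd i o m = 0 → β i o m = 0) ∧
    (∀ (i : Fin n) (o : List ((Fin n → S) × (∀ j, A j))), ∑ m, β i o m = 1) ∧
    (∀ (i : Fin n) (o : List ((Fin n → S) × (∀ j, A j))),
        0 < (∑ m', consInd i o m' * outProb P σ [] (List.ofFn m')) →
        ∀ m, β i o m * (∑ m', consInd i o m' * outProb P σ [] (List.ofFn m'))
          = consInd i o m * outProb P σ [] (List.ofFn m)) ∧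
    (∀ (i : Fin n) (o : List ((Fin n → S) × (∀ j, A j)))
        (σi' : List (S × A i) → A i → ℝ), IsStrategy σi' →
        ∑ m, β i o m * W δ (u i) P (Function.update σ i σi') (List.ofFn m)
          ≤ ∑ m, β i o m * W δ (u i) P σ (List.ofFn m))

end RepeatedGame

/-!
Fix a player `i`, a positive-probability private history `H` of his, his beliefs there, and an
action `b`. Consider the one-shot deviation that plays `b` at `H` and afterwards behaves as `σ i`
would have, had it played some action `c` at `H`. Its stage-payoff gain is the quantity to bound.
Its continuation differs from the equilibrium continuation only in that the period-`H` signals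
were drawn after `b` rather than after the recommended action; the continuation value lies in
`[0, 1]`, so `(ε, γ)`-differential privacy moves its expectation by at most `ε + γ`, provided `c`
is chosen to be the best pure action for the mimicked continuation. As `σ i` is a best reply,
`(1 - δ) · gain ≤ δ · (ε + γ)`.
-/

open Finset Function Set

theorem sum_mul_mem_Icc_s3 {ι : Type*} [Fintype ι] {w f : ι → ℝ} (hw0 : ∀ x, 0 ≤ w x)
    (hw1 : ∑ x, w x = 1) (hf : ∀ x, f x ∈ Icc (0 : ℝ) 1) : ∑ x, w x * f x ∈ Icc (0 : ℝ) 1 :=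
  ⟨sum_nonneg fun x _ => mul_nonneg (hw0 x) (hf x).1,
    hw1 ▸ sum_le_sum fun x _ => mul_le_of_le_one_right (hw0 x) (hf x).2⟩

theorem exists_sum_mul_le {ι : Type*} [Fintype ι] [Nonempty ι] {w : ι → ℝ} (hw0 : ∀ x, 0 ≤ w x)
    (hw1 : ∑ x, w x = 1) (f : ι → ℝ) : ∃ c, ∑ x, w x * f x ≤ f c := by
  obtain ⟨c, -, hc⟩ := exists_max_image univ f univ_nonempty
  refine ⟨c, ?_⟩
  calc ∑ x, w x * f x ≤ ∑ x, w x * f c :=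
        sum_le_sum fun x _ => mul_le_mul_of_nonneg_left (hc x (mem_univ x)) (hw0 x)
    _ = f c := by rw [← sum_mul, hw1, one_mul]

theorem tsum_sum_mul {ι : Type*} [Fintype ι] (w : ι → ℝ) {f : ℕ → ι → ℝ}
    (hf : ∀ x, Summable fun t => f t x) :
    ∑' t, ∑ x, w x * f t x = ∑ x, w x * ∑' t, f t x := by
  rw [Summable.tsum_finsetSum fun x _ => (hf x).mul_left (w x)]
  simp_rw [tsum_mul_left]

theorem sum_mul_congr_of_ne_zero {M : Type*} [Fintype M] {β f g : M → ℝ}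
    (h : ∀ m, β m ≠ 0 → f m = g m) : ∑ m, β m * f m = ∑ m, β m * g m :=
  sum_congr rfl fun m _ => by rcases eq_or_ne (β m) 0 with hm | hm <;> simp [hm, h]

theorem sum_mul_le_sum_mul_of_ne_zero {M : Type*} [Fintype M] {β f g : M → ℝ}
    (hβ : ∀ m, 0 ≤ β m) (h : ∀ m, β m ≠ 0 → f m ≤ g m) : ∑ m, β m * f m ≤ ∑ m, β m * g m :=
  sum_le_sum fun m _ => by
    rcases eq_or_ne (β m) 0 with hm | hm
    · simp [hm]
    · exact mul_le_mul_of_nonneg_left (h m hm) (hβ m)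

theorem sum_mul_sub_le_of_forall_finset {ι : Type*} [Fintype ι] {p q f : ι → ℝ} {c γ : ℝ}
    (hpq : ∀ E : Finset ι, c * ∑ x ∈ E, p x - γ ≤ ∑ x ∈ E, q x) (hf : ∀ x, f x ∈ Icc (0 : ℝ) 1) :
    c * ∑ x, p x * f x - γ ≤ ∑ x, q x * f x := by
  classical
  -- the indicator of `E` is the worst test function
  set E := univ.filter fun x => q x - c * p x < 0
  have hE : ∑ x ∈ E, (q x - c * p x) ≤ ∑ x ∈ E, (q x - c * p x) * f x :=
    sum_le_sum fun x hx => by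
      have := (mem_filter.1 hx).2
      nlinarith [(hf x).2]
  have hcompl : ∑ x ∈ E, (q x - c * p x) * f x ≤ ∑ x, (q x - c * p x) * f x :=
    sum_le_sum_of_subset_of_nonneg (subset_univ E) fun x _ hx =>
      mul_nonneg (not_lt.1 fun h => hx (mem_filter.2 ⟨mem_univ x, h⟩)) (hf x).1
  have := hpq E
  simp only [sub_mul, sum_sub_distrib, mul_sum, mul_assoc] at this hE hcompl ⊢
  linarith

section ExpPay

variable {n : ℕ} {A : Fin n → Type*} [∀ i, Fintype (A i)]

theorem expPay_eq_sum_piSplitAt (F : (∀ j, A j) → ℝ) (α : ∀ j, A j → ℝ) (i : Fin n) :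
    expPay F α = ∑ x : A i, ∑ r : ∀ j : {j // j ≠ i}, A j,
      α i x * (∏ j : {j // j ≠ i}, α j (r j)) * F ((Equiv.piSplitAt i A).symm (x, r)) := by
  rw [expPay, ← (Equiv.piSplitAt i A).symm.sum_comp, Fintype.sum_prod_type]
  refine sum_congr rfl fun x _ => sum_congr rfl fun r _ => ?_
  have hr : ∀ j : {j // j ≠ i}, (Equiv.piSplitAt i A).symm (x, r) j = r j := fun j => by
    simp [Equiv.piSplitAt_symm_apply, j.2]
  rw [Fintype.prod_eq_mul_prod_subtype_ne _ i]
  simp [hr]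

theorem expPay_update_pureAct [∀ i, DecidableEq (A i)] (F : (∀ j, A j) → ℝ)
    (α : ∀ j, A j → ℝ) (i : Fin n) (b : A i) :
    expPay F (update α i (pureAct i b)) = ∑ r : ∀ j : {j // j ≠ i}, A j,
      (∏ j : {j // j ≠ i}, α j (r j)) * F ((Equiv.piSplitAt i A).symm (b, r)) := by
  rw [expPay_eq_sum_piSplitAt _ _ i, sum_eq_single b]
  · refine sum_congr rfl fun r _ => ?_
    rw [update_self, pureAct, if_pos rfl, one_mul]
    exact congrArg (· * _) (Fintype.prod_congr _ _ fun j => by rw [update_of_ne j.2])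
  · intro x _ hx
    simp [pureAct, hx]
  · simp

theorem expPay_eq_sum_mul_expPay_update_pureAct [∀ i, DecidableEq (A i)]
    (F : (∀ j, A j) → ℝ) (α : ∀ j, A j → ℝ) (i : Fin n) :
    expPay F α = ∑ x, α i x * expPay F (update α i (pureAct i x)) := by
  simp only [expPay_eq_sum_piSplitAt F α i, expPay_update_pureAct, mul_sum, mul_assoc]

theorem expPay_update_pureAct_congr [∀ i, DecidableEq (A i)] {F G : (∀ j, A j) → ℝ}
    (α : ∀ j, A j → ℝ) (i : Fin n) {b c : A i}
    (hFG : ∀ a, F (update a i b) = G (update a i c)) :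
    expPay F (update α i (pureAct i b)) = expPay G (update α i (pureAct i c)) := by
  simp only [expPay_update_pureAct]
  refine sum_congr rfl fun r _ => congrArg _ ?_
  have hins : ∀ x y, update ((Equiv.piSplitAt i A).symm (y, r)) i x =
      (Equiv.piSplitAt i A).symm (x, r) := fun x y =>
    (Equiv.piSplitAt i A).injective <|
      Prod.ext (by simp) (funext fun j => by simp [Equiv.piSplitAt_symm_apply, j.2])
  rw [← hins b b, hFG, hins]

theorem sum_prod_eq_one {α : ∀ j, A j → ℝ} (hα1 : ∀ j, ∑ x, α j x = 1) :
    ∑ a : ∀ j, A j, ∏ j, α j (a j) = 1 := by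
  rw [← Fintype.prod_sum]
  simp [hα1]

theorem expPay_mem_Icc {F : (∀ j, A j) → ℝ} {α : ∀ j, A j → ℝ} (hα0 : ∀ j x, 0 ≤ α j x)
    (hα1 : ∀ j, ∑ x, α j x = 1) (hF : ∀ a, F a ∈ Icc (0 : ℝ) 1) : expPay F α ∈ Icc (0 : ℝ) 1 :=
  sum_mul_mem_Icc_s3 (fun _ => prod_nonneg fun j _ => hα0 j _) (sum_prod_eq_one hα1) hF

theorem expPay_le_expPay_add {F G : (∀ j, A j) → ℝ} {α : ∀ j, A j → ℝ} {κ : ℝ}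
    (hα0 : ∀ j x, 0 ≤ α j x) (hα1 : ∀ j, ∑ x, α j x = 1) (hFG : ∀ a, F a ≤ G a + κ) :
    expPay F α ≤ expPay G α + κ :=
  calc expPay F α ≤ ∑ a, (∏ j, α j (a j)) * (G a + κ) :=
        sum_le_sum fun a _ => mul_le_mul_of_nonneg_left (hFG a) (prod_nonneg fun j _ => hα0 j _)
    _ = expPay G α + κ := by
        simp only [expPay, mul_add, sum_add_distrib, ← sum_mul, sum_prod_eq_one hα1, one_mul]

end ExpPay

theorem sum_mul_le_sum_update_mul_add_of_privDP {n : ℕ} {A : Fin n → Type*} {S : Type*} [Fintype S]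
    {P : (∀ j, A j) → (Fin n → S) → ℝ} {ε γ : ℝ} (hε : 0 ≤ ε) (hDP : PrivDP ε γ P)
    (hP0 : ∀ a sv, 0 ≤ P a sv) (hP1 : ∀ a, ∑ sv, P a sv = 1) (a : ∀ j, A j) (i : Fin n) (b : A i)
    {f : (Fin n → S) → ℝ} (hf : ∀ sv, f sv ∈ Icc (0 : ℝ) 1) :
    ∑ sv, P a sv * f sv ≤ ∑ sv, P (update a i b) sv * f sv + (ε + γ) := by
  have hlow := sum_mul_sub_le_of_forall_finset (fun E => by
    simpa using (hDP (update a i b) i (a i) E).1) hf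
  have hmean := sum_mul_mem_Icc_s3 (hP0 a) (hP1 a) hf
  have hexp : 1 - ε ≤ Real.exp (-ε) := by linarith [Real.add_one_le_exp (-ε)]
  have hexp1 : Real.exp (-ε) ≤ 1 := Real.exp_le_one_iff.2 (neg_nonpos.2 hε)
  nlinarith [mul_le_mul_of_nonneg_right hmean.2 (sub_nonneg.2 hexp1)]

theorem privH_append {n : ℕ} {A : Fin n → Type*} {S : Type*} (j : Fin n)
    (p : List ((Fin n → S) × (∀ j, A j))) (x : (Fin n → S) × (∀ j, A j)) :
    privH j (p ++ [x]) = privH j p ++ [(x.1 j, x.2 j)] := by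
  simp [privH]

section Deviation

variable {n : ℕ} {A : Fin n → Type*} {S : Type*} [DecidableEq S] [∀ i, DecidableEq (A i)]

/-- The one-shot deviation to `b` at the private history `H`: afterwards player `i` behaves as
`σi` would have, had he played `c` at `H`. -/
def devStrat (i : Fin n) (H : List (S × A i)) (b c : A i) (σi : List (S × A i) → A i → ℝ)
    (h : List (S × A i)) : A i → ℝ :=
  if h = H then pureAct i b
  else if H <+: h then σi (H ++ (h.drop H.length).modifyHead fun x => (x.1, c))
  else σi h

theorem devStrat_self (i : Fin n) (H : List (S × A i)) (b c : A i)
    (σi : List (S × A i) → A i → ℝ) : devStrat i H b c σi H = pureAct i b :=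
  if_pos rfl

theorem devStrat_append_cons (i : Fin n) (H : List (S × A i)) (b c : A i)
    (σi : List (S × A i) → A i → ℝ) (s : S) (x : A i) (r : List (S × A i)) :
    devStrat i H b c σi (H ++ (s, x) :: r) = σi (H ++ (s, c) :: r) := by
  simp [devStrat]

theorem isStrategy_devStrat [∀ i, Fintype (A i)] {i : Fin n} {σi : List (S × A i) → A i → ℝ}
    (hσi : IsStrategy σi) (H : List (S × A i)) (b c : A i) : IsStrategy (devStrat i H b c σi) := by
  intro h
  unfold devStrat
  split_ifs
  · exact ⟨fun x => by unfold pureAct; split_ifs <;> norm_num, by simp [pureAct]⟩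
  all_goals exact hσi _

theorem update_devStrat_profile {σ : ∀ i : Fin n, List (S × A i) → A i → ℝ} {i : Fin n}
    {H : List (S × A i)} {p : List ((Fin n → S) × (∀ j, A j))} (hH : privH i p = H) (b c : A i) :
    (fun j => update σ i (devStrat i H b c (σ i)) j (privH j p)) =
      update (fun j => σ j (privH j p)) i (pureAct i b) := by
  funext j
  rcases eq_or_ne j i with rfl | hj
  · simp [hH, devStrat_self]
  · simp [update_of_ne hj]

end Deviation

section ValueFunction

variable {n : ℕ} {A : Fin n → Type*} [∀ i, Fintype (A i)]
variable {S : Type*} [Fintype S] {δ : ℝ} {u : (∀ j, A j) → ℝ} {P : (∀ j, A j) → (Fin n → S) → ℝ}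
  {σ : ∀ i : Fin n, List (S × A i) → A i → ℝ}

theorem EUW_succ (t : ℕ) (p : List ((Fin n → S) × (∀ j, A j))) :
    EUW u P σ (t + 1) p = expPay (fun a => ∑ sv, P a sv * EUW u P σ t (p ++ [(sv, a)]))
      (fun j => σ j (privH j p)) := by
  simp only [EUW, expPay, mul_sum, mul_assoc]

theorem EUW_mem_Icc (hu : ∀ a, u a ∈ Icc (0 : ℝ) 1) (hP0 : ∀ a sv, 0 ≤ P a sv)
    (hP1 : ∀ a, ∑ sv, P a sv = 1) (hσ : ∀ j, IsStrategy (σ j)) (t : ℕ)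
    (p : List ((Fin n → S) × (∀ j, A j))) : EUW u P σ t p ∈ Icc (0 : ℝ) 1 := by
  induction t generalizing p with
  | zero => exact expPay_mem_Icc (fun j => (hσ j _).1) (fun j => (hσ j _).2) hu
  | succ t ih =>
    rw [EUW_succ]
    exact expPay_mem_Icc (fun j => (hσ j _).1) (fun j => (hσ j _).2)
      fun a => sum_mul_mem_Icc_s3 (hP0 a) (hP1 a) fun sv => ih _

theorem summable_EUW (hδ0 : 0 ≤ δ) (hδ1 : δ < 1) (hu : ∀ a, u a ∈ Icc (0 : ℝ) 1)
    (hP0 : ∀ a sv, 0 ≤ P a sv) (hP1 : ∀ a, ∑ sv, P a sv = 1) (hσ : ∀ j, IsStrategy (σ j))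
    (p : List ((Fin n → S) × (∀ j, A j))) : Summable fun t => δ ^ t * EUW u P σ t p :=
  (summable_geometric_of_lt_one hδ0 hδ1).of_nonneg_of_le
    (fun t => mul_nonneg (pow_nonneg hδ0 t) (EUW_mem_Icc hu hP0 hP1 hσ t p).1)
    fun t => mul_le_of_le_one_right (pow_nonneg hδ0 t) (EUW_mem_Icc hu hP0 hP1 hσ t p).2

theorem W_mem_Icc (hδ0 : 0 ≤ δ) (hδ1 : δ < 1) (hu : ∀ a, u a ∈ Icc (0 : ℝ) 1)
    (hP0 : ∀ a sv, 0 ≤ P a sv) (hP1 : ∀ a, ∑ sv, P a sv = 1) (hσ : ∀ j, IsStrategy (σ j))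
    (p : List ((Fin n → S) × (∀ j, A j))) : W δ u P σ p ∈ Icc (0 : ℝ) 1 := by
  have h1δ : 0 < 1 - δ := sub_pos.2 hδ1
  have hle : ∑' t, δ ^ t * EUW u P σ t p ≤ (1 - δ)⁻¹ :=
    tsum_geometric_of_lt_one hδ0 hδ1 ▸ (summable_EUW hδ0 hδ1 hu hP0 hP1 hσ p).tsum_le_tsum
      (fun t => mul_le_of_le_one_right (pow_nonneg hδ0 t) (EUW_mem_Icc hu hP0 hP1 hσ t p).2)
      (summable_geometric_of_lt_one hδ0 hδ1)
  refine ⟨mul_nonneg h1δ.le (tsum_nonneg fun t =>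
    mul_nonneg (pow_nonneg hδ0 t) (EUW_mem_Icc hu hP0 hP1 hσ t p).1), ?_⟩
  calc W δ u P σ p ≤ (1 - δ) * (1 - δ)⁻¹ := mul_le_mul_of_nonneg_left hle h1δ.le
    _ = 1 := mul_inv_cancel₀ h1δ.ne'

/-- The expected continuation value after the profile `a` is played at `p`, the signals being
drawn from `Q a`: from `P a` itself, or from `P (update a i b)` as after a deviation to `b`. -/
noncomputable def contValue (δ : ℝ) (u : (∀ j, A j) → ℝ) (P : (∀ j, A j) → (Fin n → S) → ℝ)
    (σ : ∀ i : Fin n, List (S × A i) → A i → ℝ) (Q : (∀ j, A j) → (Fin n → S) → ℝ)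
    (p : List ((Fin n → S) × (∀ j, A j))) (a : ∀ j, A j) : ℝ :=
  ∑ sv, Q a sv * W δ u P σ (p ++ [(sv, a)])

theorem W_eq_expPay_add (hδ0 : 0 ≤ δ) (hδ1 : δ < 1) (hu : ∀ a, u a ∈ Icc (0 : ℝ) 1)
    (hP0 : ∀ a sv, 0 ≤ P a sv) (hP1 : ∀ a, ∑ sv, P a sv = 1) (hσ : ∀ j, IsStrategy (σ j))
    (p : List ((Fin n → S) × (∀ j, A j))) :
    W δ u P σ p = (1 - δ) * expPay u (fun j => σ j (privH j p)) +
      δ * expPay (contValue δ u P σ P p) (fun j => σ j (privH j p)) := by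
  have hs := summable_EUW hδ0 hδ1 hu hP0 hP1 hσ
  have hstep : ∀ t, δ ^ t * EUW u P σ (t + 1) p = ∑ a, (∏ j, σ j (privH j p) (a j)) *
      ∑ sv, P a sv * (δ ^ t * EUW u P σ t (p ++ [(sv, a)])) := fun t => by
    simp only [EUW_succ, expPay, mul_sum]
    exact sum_congr rfl fun a _ => sum_congr rfl fun sv _ => by ring
  have htail : (1 - δ) * ∑' t, δ ^ t * EUW u P σ (t + 1) p =
      expPay (contValue δ u P σ P p) (fun j => σ j (privH j p)) := by
    rw [tsum_congr hstep, tsum_sum_mul _ fun a => summable_sum fun sv _ => (hs _).mul_left (P a sv)]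
    simp_rw [tsum_sum_mul _ fun sv => hs _]
    simp only [expPay, contValue, W, mul_sum]
    exact sum_congr rfl fun a _ => sum_congr rfl fun sv _ => by ring
  rw [W, (hs p).tsum_eq_zero_add, ← htail]
  simp only [pow_succ', mul_assoc, tsum_mul_left]
  change (1 - δ) * (1 * expPay u (fun j => σ j (privH j p)) + _) = _
  ring

theorem sum_mul_W_eq_expPay_add (hδ0 : 0 ≤ δ) (hδ1 : δ < 1) (hu : ∀ a, u a ∈ Icc (0 : ℝ) 1)
    (hP0 : ∀ a sv, 0 ≤ P a sv) (hP1 : ∀ a, ∑ sv, P a sv = 1) (hσ : ∀ j, IsStrategy (σ j))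
    {M : Type*} [Fintype M] (β : M → ℝ) (p : M → List ((Fin n → S) × (∀ j, A j))) :
    ∑ m, β m * W δ u P σ (p m) =
      (1 - δ) * ∑ m, β m * expPay u (fun j => σ j (privH j (p m))) +
        δ * ∑ m, β m * expPay (contValue δ u P σ P (p m)) (fun j => σ j (privH j (p m))) := by
  simp only [W_eq_expPay_add hδ0 hδ1 hu hP0 hP1 hσ, mul_sum, ← sum_add_distrib]
  exact sum_congr rfl fun m _ => by ring

theorem EUW_congr {σ' : ∀ i : Fin n, List (S × A i) → A i → ℝ}
    {p₁ p₂ : List ((Fin n → S) × (∀ j, A j))}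
    (h : ∀ j r, σ' j (privH j p₁ ++ r) = σ j (privH j p₂ ++ r)) (t : ℕ) :
    EUW u P σ' t p₁ = EUW u P σ t p₂ := by
  have hprof : (fun j => σ' j (privH j p₁)) = fun j => σ j (privH j p₂) :=
    funext fun j => by simpa using h j []
  induction t generalizing p₁ p₂ with
  | zero => exact congrArg (expPay u) hprof
  | succ t ih =>
    rw [EUW_succ, EUW_succ, hprof]
    refine congrArg (expPay · _) (funext fun a => sum_congr rfl fun sv _ =>
      congrArg _ (ih (fun j r => ?_) ?_))
    · simpa [privH_append] using h j ((sv j, a j) :: r)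
    · exact funext fun j => by simpa [privH_append] using h j [(sv j, a j)]

theorem W_congr {σ' : ∀ i : Fin n, List (S × A i) → A i → ℝ}
    {p₁ p₂ : List ((Fin n → S) × (∀ j, A j))}
    (h : ∀ j r, σ' j (privH j p₁ ++ r) = σ j (privH j p₂ ++ r)) :
    W δ u P σ' p₁ = W δ u P σ p₂ := by
  simp only [W, EUW_congr h]

theorem contValue_le_contValue_update_add {ε γ : ℝ} (hδ0 : 0 ≤ δ) (hδ1 : δ < 1)
    (hu : ∀ a, u a ∈ Icc (0 : ℝ) 1) (hP0 : ∀ a sv, 0 ≤ P a sv) (hP1 : ∀ a, ∑ sv, P a sv = 1)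
    (hσ : ∀ j, IsStrategy (σ j)) (hε : 0 ≤ ε) (hDP : PrivDP ε γ P)
    (p : List ((Fin n → S) × (∀ j, A j))) (a : ∀ j, A j) (i : Fin n) (b : A i) :
    contValue δ u P σ P p a ≤ contValue δ u P σ (fun a => P (update a i b)) p a + (ε + γ) :=
  sum_mul_le_sum_update_mul_add_of_privDP hε hDP hP0 hP1 a i b fun _ =>
    W_mem_Icc hδ0 hδ1 hu hP0 hP1 hσ _

variable [∀ i, DecidableEq (A i)]

theorem expPay_contValue_le_sum_mul_add {ε γ : ℝ} (hδ0 : 0 ≤ δ) (hδ1 : δ < 1)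
    (hu : ∀ a, u a ∈ Icc (0 : ℝ) 1) (hP0 : ∀ a sv, 0 ≤ P a sv) (hP1 : ∀ a, ∑ sv, P a sv = 1)
    (hσ : ∀ j, IsStrategy (σ j)) (hε : 0 ≤ ε) (hDP : PrivDP ε γ P)
    (p : List ((Fin n → S) × (∀ j, A j))) (i : Fin n) (b : A i) :
    expPay (contValue δ u P σ P p) (fun j => σ j (privH j p)) ≤
      ∑ x, σ i (privH i p) x * expPay (contValue δ u P σ (fun a => P (update a i b)) p)
        (update (fun j => σ j (privH j p)) i (pureAct i x)) + (ε + γ) :=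
  calc _ ≤ expPay (contValue δ u P σ (fun a => P (update a i b)) p)
          (fun j => σ j (privH j p)) + (ε + γ) :=
        expPay_le_expPay_add (fun j => (hσ j _).1) (fun j => (hσ j _).2) fun a =>
          contValue_le_contValue_update_add hδ0 hδ1 hu hP0 hP1 hσ hε hDP p a i b
    _ = _ := by rw [expPay_eq_sum_mul_expPay_update_pureAct _ _ i]

variable [DecidableEq S]

theorem W_update_devStrat {i : Fin n} {H : List (S × A i)} {p : List ((Fin n → S) × (∀ j, A j))}
    (hH : privH i p = H) {b : A i} (c : A i) (sv : Fin n → S) {a : ∀ j, A j} (ha : a i = b) :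
    W δ u P (update σ i (devStrat i H b c (σ i))) (p ++ [(sv, a)]) =
      W δ u P σ (p ++ [(sv, update a i c)]) := by
  refine W_congr fun j r => ?_
  rcases eq_or_ne j i with rfl | hj
  · simp [privH_append, hH, ha, devStrat_append_cons]
  · simp [privH_append, update_of_ne hj]

theorem expPay_contValue_update_devStrat {i : Fin n} {H : List (S × A i)}
    {p : List ((Fin n → S) × (∀ j, A j))} (hH : privH i p = H) (b c : A i) :
    expPay (contValue δ u P (update σ i (devStrat i H b c (σ i))) P p)
        (fun j => update σ i (devStrat i H b c (σ i)) j (privH j p)) =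
      expPay (contValue δ u P σ (fun a => P (update a i b)) p)
        (update (fun j => σ j (privH j p)) i (pureAct i c)) := by
  rw [update_devStrat_profile hH]
  refine expPay_update_pureAct_congr _ i fun a => sum_congr rfl fun sv _ => ?_
  rw [W_update_devStrat hH c sv (update_self i b a), update_idem]
  simp only [update_idem]

end ValueFunction

section Beliefs

variable {n : ℕ} {A : Fin n → Type*} [∀ i, Fintype (A i)] [∀ i, DecidableEq (A i)]
  {S : Type*} [Fintype S] {δ : ℝ} {u : (∀ j, A j) → ℝ} {P : (∀ j, A j) → (Fin n → S) → ℝ}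
  {σ : ∀ i : Fin n, List (S × A i) → A i → ℝ}
  {M : Type*} [Fintype M] {β : M → ℝ} {p : M → List ((Fin n → S) × (∀ j, A j))}
  {i : Fin n} {H : List (S × A i)} {ε γ : ℝ}

theorem exists_sum_mul_expPay_contValue_le (hδ0 : 0 ≤ δ) (hδ1 : δ < 1)
    (hu : ∀ a, u a ∈ Icc (0 : ℝ) 1) (hP0 : ∀ a sv, 0 ≤ P a sv) (hP1 : ∀ a, ∑ sv, P a sv = 1)
    (hσ : ∀ j, IsStrategy (σ j)) (hε : 0 ≤ ε) (hDP : PrivDP ε γ P) (hβ0 : ∀ m, 0 ≤ β m)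
    (hβ1 : ∑ m, β m = 1) (hH : ∀ m, β m ≠ 0 → privH i (p m) = H) (b : A i) :
    ∃ c, ∑ m, β m * expPay (contValue δ u P σ P (p m)) (fun j => σ j (privH j (p m))) ≤
      ∑ m, β m * expPay (contValue δ u P σ (fun a => P (update a i b)) (p m))
        (update (fun j => σ j (privH j (p m))) i (pureAct i c)) + (ε + γ) := by
  set Φ : A i → ℝ := fun x => ∑ m, β m *
    expPay (contValue δ u P σ (fun a => P (update a i b)) (p m))
      (update (fun j => σ j (privH j (p m))) i (pureAct i x))
  have : Nonempty (A i) := ⟨b⟩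
  obtain ⟨c, hc⟩ := exists_sum_mul_le (hσ i H).1 (hσ i H).2 Φ
  refine ⟨c, ?_⟩
  calc _ ≤ ∑ m, β m * (∑ x, σ i H x *
          expPay (contValue δ u P σ (fun a => P (update a i b)) (p m))
            (update (fun j => σ j (privH j (p m))) i (pureAct i x)) + (ε + γ)) :=
        sum_mul_le_sum_mul_of_ne_zero hβ0 fun m hm => by
          rw [← hH m hm]
          exact expPay_contValue_le_sum_mul_add hδ0 hδ1 hu hP0 hP1 hσ hε hDP (p m) i b
    _ = ∑ x, σ i H x * Φ x + (ε + γ) := by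
        simp only [mul_add, sum_add_distrib, ← sum_mul, hβ1, one_mul]
        simp only [Φ, mul_sum]
        rw [sum_comm]
        simp only [mul_left_comm]
    _ ≤ Φ c + (ε + γ) := by linarith

variable [DecidableEq S]

theorem sum_mul_expPay_update_pureAct_sub_le (hδ0 : 0 ≤ δ) (hδ1 : δ < 1)
    (hu : ∀ a, u a ∈ Icc (0 : ℝ) 1) (hP0 : ∀ a sv, 0 ≤ P a sv) (hP1 : ∀ a, ∑ sv, P a sv = 1)
    (hσ : ∀ j, IsStrategy (σ j)) (hε : 0 ≤ ε) (hDP : PrivDP ε γ P) (hβ0 : ∀ m, 0 ≤ β m)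
    (hβ1 : ∑ m, β m = 1) (hH : ∀ m, β m ≠ 0 → privH i (p m) = H)
    (hBR : ∀ σi', IsStrategy σi' →
      ∑ m, β m * W δ u P (update σ i σi') (p m) ≤ ∑ m, β m * W δ u P σ (p m))
    (b : A i) :
    ∑ m, β m * (expPay u (update (fun j => σ j (privH j (p m))) i (pureAct i b)) -
      expPay u (fun j => σ j (privH j (p m)))) ≤ δ / (1 - δ) * (ε + γ) := by
  obtain ⟨c, hc⟩ := exists_sum_mul_expPay_contValue_le hδ0 hδ1 hu hP0 hP1 hσ hε hDP hβ0 hβ1 hH b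
  have hdev := isStrategy_devStrat (hσ i) H b c
  have hσ' : ∀ j, IsStrategy (update σ i (devStrat i H b c (σ i)) j) := fun j => by
    rcases eq_or_ne j i with rfl | hj
    · simpa using hdev
    · simpa [update_of_ne hj] using hσ j
  have hstage := sum_mul_congr_of_ne_zero (β := β) (f := fun m =>
    expPay u (fun j => update σ i (devStrat i H b c (σ i)) j (privH j (p m))))
    fun m hm => congrArg (expPay u) (update_devStrat_profile (hH m hm) b c)
  have hcont := sum_mul_congr_of_ne_zero (β := β) fun m hm =>
    expPay_contValue_update_devStrat (δ := δ) (u := u) (P := P) (σ := σ) (hH m hm) b c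
  have hBR' := hBR _ hdev
  rw [sum_mul_W_eq_expPay_add hδ0 hδ1 hu hP0 hP1 hσ', sum_mul_W_eq_expPay_add hδ0 hδ1 hu hP0 hP1 hσ,
    hstage, hcont] at hBR'
  rw [div_mul_eq_mul_div, le_div_iff₀ (sub_pos.2 hδ1)]
  simp only [mul_sub, sum_sub_distrib]
  nlinarith [mul_le_mul_of_nonneg_left hc hδ0]

end Beliefs

section Bayes

variable {n : ℕ} {A : Fin n → Type*} {S : Type*}

theorem outProb_nonneg [∀ i, Fintype (A i)] {P : (∀ j, A j) → (Fin n → S) → ℝ}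
    {σ : ∀ i : Fin n, List (S × A i) → A i → ℝ} (hP0 : ∀ a sv, 0 ≤ P a sv)
    (hσ : ∀ j, IsStrategy (σ j)) (past o : List ((Fin n → S) × (∀ j, A j))) :
    0 ≤ outProb P σ past o := by
  induction o generalizing past with
  | nil => simp [outProb]
  | cons x o ih =>
    exact mul_nonneg (mul_nonneg (prod_nonneg fun j _ => (hσ j _).1 _) (hP0 _ _)) (ih _)

variable [∀ i, DecidableEq (A i)] [DecidableEq S]

theorem privH_ofFn_eq_of_consInd_ne_zero {i : Fin n} {o : List ((Fin n → S) × (∀ j, A j))}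
    {m : Fin o.length → (Fin n → S) × (∀ j, A j)} (hm : consInd i o m ≠ 0) :
    privH i (List.ofFn m) = privH i o := by
  have hcons : ∀ τ, (m τ).1 i = (o.get τ).1 i ∧ (m τ).2 i = (o.get τ).2 i := by
    by_contra h
    exact hm (if_neg h)
  refine List.ext_get (by simp [privH]) fun τ h₁ _ => ?_
  have hτ : τ < o.length := by simpa [privH] using h₁
  simp [privH, (hcons ⟨τ, hτ⟩).1, (hcons ⟨τ, hτ⟩).2]

theorem sum_consInd_mul_outProb_pos [∀ i, Fintype (A i)] [Fintype S]
    {P : (∀ j, A j) → (Fin n → S) → ℝ} {σ : ∀ i : Fin n, List (S × A i) → A i → ℝ}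
    (hP0 : ∀ a sv, 0 ≤ P a sv) (hσ : ∀ j, IsStrategy (σ j)) (i : Fin n)
    {o : List ((Fin n → S) × (∀ j, A j))} (hpos : 0 < outProb P σ [] o) :
    0 < ∑ m, consInd i o m * outProb P σ [] (List.ofFn m) := by
  refine sum_pos' (fun m _ => mul_nonneg ?_ (outProb_nonneg hP0 hσ _ _)) ⟨o.get, mem_univ _, ?_⟩
  · unfold consInd
    split_ifs <;> norm_num
  · rw [consInd, if_pos fun τ => ⟨rfl, rfl⟩, one_mul, List.ofFn_get]
    exact hpos

end Bayes

theorem seqEq_private_approx_stage_corr_general {n : ℕ} {A : Fin n → Type*}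
    [∀ i, Fintype (A i)] [∀ i, DecidableEq (A i)] {S : Type*} [Fintype S] [DecidableEq S]
    (δ : ℝ) (hδ0 : 0 ≤ δ) (hδ1 : δ < 1)
    (u : ∀ i : Fin n, (∀ j, A j) → ℝ) (hu : ∀ i a, u i a ∈ Set.Icc (0 : ℝ) 1)
    (P : (∀ j, A j) → (Fin n → S) → ℝ)
    (hP0 : ∀ a sv, 0 ≤ P a sv) (hP1 : ∀ a, ∑ sv, P a sv = 1)
    (ε γ : ℝ) (hε : 0 ≤ ε) (hDP : PrivDP ε γ P)
    (σ : ∀ i : Fin n, List (S × A i) → A i → ℝ) (hσ : IsSeqEq δ u P σ)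
    (o : List ((Fin n → S) × (∀ j, A j))) (hpos : 0 < outProb P σ [] o) :
    ∀ (i : Fin n) (b : A i),
      (∑ m : Fin o.length → ((Fin n → S) × (∀ j, A j)),
          consInd i o m * outProb P σ [] (List.ofFn m) *
            (expPay (u i)
                (Function.update (fun j => σ j (privH j (List.ofFn m))) i (pureAct i b)) -
              expPay (u i) (fun j => σ j (privH j (List.ofFn m))))) /
        (∑ m : Fin o.length → ((Fin n → S) × (∀ j, A j)),
          consInd i o m * outProb P σ [] (List.ofFn m))
      ≤ δ / (1 - δ) * (ε + γ) := by
  intro i b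
  obtain ⟨hσ, β, hβ0, hβ_supp, hβ1, hβ_bayes, hβ_br⟩ := hσ
  have hD := sum_consInd_mul_outProb_pos hP0 hσ i hpos
  have hgain := sum_mul_expPay_update_pureAct_sub_le hδ0 hδ1 (hu i) hP0 hP1 hσ hε hDP
    (hβ0 i o) (hβ1 i o) (fun m hm => privH_ofFn_eq_of_consInd_ne_zero fun h => hm (hβ_supp i o m h))
    (hβ_br i o) b
  rw [div_le_iff₀ hD, mul_comm]
  calc _ = (∑ m, consInd i o m * outProb P σ [] (List.ofFn m)) * ∑ m, β i o m *
        (expPay (u i) (update (fun j => σ j (privH j (List.ofFn m))) i (pureAct i b)) -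
          expPay (u i) (fun j => σ j (privH j (List.ofFn m)))) := by
        rw [mul_sum]
        exact sum_congr rfl fun m _ => by rw [← hβ_bayes i o hD m]; ring
    _ ≤ _ := mul_le_mul_of_nonneg_left hgain hD.le

/-- **Anti-folk theorem for sequential equilibria under private monitoring (Theorem 4 of
the paper).**  Fix a repeated game with discount factor `δ ∈ [0,1)`, stage payoffs in
`[0,1]`, and a private monitoring structure satisfying `(ε,γ)`-differential privacy and
no observable deviations.  Let `σ` be a sequential equilibrium.  Then for every vector of
private histories occurring with positive probability (equivalently, every positive
probability outcome prefix `o`), the distribution on period-`t` action profiles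
`(σ₁(h₁),…,σₙ(hₙ))`, with players' private histories as correlating signals, is an
`η`-approximate correlated equilibrium of the stage game with `η = (δ/(1-δ))·(ε+γ)`:
for every player `i` and every action `b`, the conditional expected gain from deviating
to `b`, given player `i`'s private history `privH i o`, is at most `η`. -/
theorem seqEq_private_approx_stage_corr {n : ℕ} {A : Fin n → Type*}
    [∀ i, Fintype (A i)] [∀ i, DecidableEq (A i)] {S : Type*} [Fintype S] [DecidableEq S]
    (δ : ℝ) (hδ0 : 0 ≤ δ) (hδ1 : δ < 1)
    (u : ∀ i : Fin n, (∀ j, A j) → ℝ) (hu : ∀ i a, u i a ∈ Set.Icc (0 : ℝ) 1)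
    (P : (∀ j, A j) → (Fin n → S) → ℝ)
    (hP0 : ∀ a sv, 0 ≤ P a sv) (hP1 : ∀ a, ∑ sv, P a sv = 1)
    (hNOD : NoObsDevPriv P)
    (ε γ : ℝ) (hε : 0 ≤ ε) (hγ : 0 ≤ γ) (hDP : PrivDP ε γ P)
    (σ : ∀ i : Fin n, List (S × A i) → A i → ℝ) (hσ : IsSeqEq δ u P σ)
    (o : List ((Fin n → S) × (∀ j, A j))) (hpos : 0 < outProb P σ [] o) :
    ∀ (i : Fin n) (b : A i),
      (∑ m : Fin o.length → ((Fin n → S) × (∀ j, A j)),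
          consInd i o m * outProb P σ [] (List.ofFn m) *
            (expPay (u i)
                (Function.update (fun j => σ j (privH j (List.ofFn m))) i (pureAct i b)) -
              expPay (u i) (fun j => σ j (privH j (List.ofFn m))))) /
        (∑ m : Fin o.length → ((Fin n → S) × (∀ j, A j)),
          consInd i o m * outProb P σ [] (List.ofFn m))
      ≤ δ / (1 - δ) * (ε + γ) :=
  seqEq_private_approx_stage_corr_general δ hδ0 hδ1 u hu P hP0 hP1 ε γ hε hDP σ hσ o hpos
end

section
/- Fix σ > 0 and d ∈ ℕ. There is a constant C (depending only on σ) such that for every s ∈ (0, 1/2] and every function f : T^n → ℝ^d with L² sensitivity at most s, the mechanism that outputs f(t) + Z, where Z ∈ ℝ^d has coordinates drawn i.i.d. from N(0,σ²), is (ε,γ)-differentially private for some ε, γ ≥ 0 with ε + γ ≤ C·s·√(log(1/s)). In particular, if the sensitivity s = s(n) is O(1/n) as the number of coordinates n grows, then the mechanism is (ε,γ)-differentially private with ε + γ = O(√(log n)/n). -/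
open MeasureTheory ProbabilityTheory
open scoped BigOperators

/-- The Gaussian mechanism: on input `t`, output `f t + Z` where `Z ∈ ℝ^d` has
coordinates drawn i.i.d. from `N(0, σ²)`. -/
noncomputable def gaussMech {T : Type} {n d : ℕ} (f : (Fin n → T) → (Fin d → ℝ))
    (σ : ℝ) (t : Fin n → T) : Measure (Fin d → ℝ) :=
  Measure.map (fun z => f t + z)
    (Measure.pi fun _ : Fin d => gaussianReal 0 (σ ^ 2).toNNReal)

open Real
open scoped NNReal ENNReal

/-!
Take `ε = 0`. Two Gaussians `N(a, v)` and `N(b, v)` have total-variation distance at most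
`|a - b| / √(2πv)`: the density of the first exceeds that of the second exactly on a half-line,
and the excess mass there is the mass of an interval of length `|a - b|`, bounded by the peak
density. Total variation is subadditive over product measures, so on adjacent inputs the
outputs of the mechanism are within `d·s/√(2πσ²)` of each other, and for `s ≤ 1/2` this is
at most `C·s·√(log(1/s))`.
-/

/-- One-sided total-variation bound, in its dual form over `[0, 1]`-valued test functions. -/
def TVLe {α : Type*} [MeasurableSpace α] (μ ν : Measure α) (δ : ℝ≥0∞) : Prop :=
  ∀ g : α → ℝ≥0∞, Measurable g → (∀ x, g x ≤ 1) → ∫⁻ x, g x ∂μ ≤ ∫⁻ x, g x ∂ν + δ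

namespace TVLe

variable {α β : Type*} [MeasurableSpace α] [MeasurableSpace β]
  {μ ν : Measure α} {δ : ℝ≥0∞}

theorem mono (h : TVLe μ ν δ) {δ' : ℝ≥0∞} (hδ : δ ≤ δ') : TVLe μ ν δ' :=
  fun g hg hg1 => (h g hg hg1).trans (by gcongr)

theorem measure_le (h : TVLe μ ν δ) {E : Set α} (hE : MeasurableSet E) : μ E ≤ ν E + δ := by
  simpa only [lintegral_indicator_one hE] using
    h _ (measurable_one.indicator hE) (Set.indicator_le fun _ _ => le_rfl)

theorem toReal_measure_le [IsFiniteMeasure ν] {γ : ℝ} (h : TVLe μ ν (ENNReal.ofReal γ))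
    (hγ : 0 ≤ γ) {E : Set α} (hE : MeasurableSet E) : (μ E).toReal ≤ (ν E).toReal + γ := by
  rw [← ENNReal.toReal_ofReal hγ, ← ENNReal.toReal_add (measure_ne_top ν E) ENNReal.ofReal_ne_top]
  exact ENNReal.toReal_mono (by finiteness) (h.measure_le hE)

theorem map (h : TVLe μ ν δ) {f : α → β} (hf : Measurable f) :
    TVLe (μ.map f) (ν.map f) δ := fun g hg hg1 => by
  rw [lintegral_map hg hf, lintegral_map hg hf]
  exact h (g ∘ f) (hg.comp hf) fun x => hg1 (f x)

theorem prod {μ₂ ν₂ : Measure β} {δ₂ : ℝ≥0∞} [IsProbabilityMeasure μ] [SFinite μ₂]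
    [IsProbabilityMeasure ν₂] (h : TVLe μ ν δ) (h₂ : TVLe μ₂ ν₂ δ₂) :
    TVLe (μ.prod μ₂) (ν.prod ν₂) (δ + δ₂) := fun g hg hg1 => by
  have hsec : ∀ x, Measurable fun y => g (x, y) := fun x => hg.comp measurable_prodMk_left
  have hsec_le : ∀ x, ∫⁻ y, g (x, y) ∂ν₂ ≤ 1 := fun x =>
    (lintegral_mono fun y => hg1 (x, y)).trans_eq (by simp)
  calc ∫⁻ z, g z ∂μ.prod μ₂
      = ∫⁻ x, ∫⁻ y, g (x, y) ∂μ₂ ∂μ := lintegral_prod _ hg.aemeasurable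
    _ ≤ ∫⁻ x, (∫⁻ y, g (x, y) ∂ν₂ + δ₂) ∂μ :=
        lintegral_mono fun x => h₂ _ (hsec x) fun y => hg1 (x, y)
    _ = ∫⁻ x, ∫⁻ y, g (x, y) ∂ν₂ ∂μ + δ₂ := by
        rw [lintegral_add_right _ measurable_const, lintegral_const, measure_univ, mul_one]
    _ ≤ ∫⁻ x, ∫⁻ y, g (x, y) ∂ν₂ ∂ν + δ + δ₂ := by
        gcongr
        exact h _ hg.lintegral_prod_right' hsec_le
    _ = ∫⁻ z, g z ∂ν.prod ν₂ + (δ + δ₂) := by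
        rw [lintegral_prod _ hg.aemeasurable, add_assoc]

theorem withDensity {f f' : α → ℝ≥0∞} (hf : Measurable f) (hf' : Measurable f') :
    TVLe (μ.withDensity f) (μ.withDensity f') (∫⁻ x, f x - f' x ∂μ) := fun g hg hg1 => by
  have hpt : ∀ x, f x * g x ≤ f' x * g x + (f x - f' x) := fun x =>
    calc f x * g x ≤ (f' x + (f x - f' x)) * g x := by gcongr; exact le_add_tsub
      _ ≤ f' x * g x + (f x - f' x) := by
        rw [add_mul]; gcongr; exact mul_le_of_le_one_right' (hg1 x)
  rw [lintegral_withDensity_eq_lintegral_mul _ hf hg,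
    lintegral_withDensity_eq_lintegral_mul _ hf' hg, ← lintegral_add_left (hf'.mul hg)]
  exact lintegral_mono hpt

theorem pi {d : ℕ} {α : Fin d → Type*} [∀ i, MeasurableSpace (α i)]
    {μ ν : ∀ i, Measure (α i)} [∀ i, IsProbabilityMeasure (μ i)]
    [∀ i, IsProbabilityMeasure (ν i)] {δ : Fin d → ℝ≥0∞} (h : ∀ i, TVLe (μ i) (ν i) (δ i)) :
    TVLe (Measure.pi μ) (Measure.pi ν) (∑ i, δ i) := by
  induction d with
  | zero =>
    intro g _ _
    rw [Measure.pi_of_empty μ, Measure.pi_of_empty ν]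
    exact le_self_add
  | succ d ih =>
    have hsplit : ∀ ρ : ∀ i, Measure (α i), [∀ i, IsProbabilityMeasure (ρ i)] →
        Measure.pi ρ = ((ρ 0).prod (Measure.pi fun j => ρ (Fin.succAbove 0 j))).map
          (MeasurableEquiv.piFinSuccAbove α 0).symm := fun ρ _ =>
      (MeasurePreserving.symm _ (measurePreserving_piFinSuccAbove ρ 0)).map_eq.symm
    rw [hsplit μ, hsplit ν, Fin.sum_univ_succAbove _ 0]
    exact ((h 0).prod (ih fun j => h (Fin.succAbove 0 j))).map (MeasurableEquiv.measurable _)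

end TVLe

section Gaussian

variable {v : ℝ≥0}

theorem gaussianPDFReal_le (μ : ℝ) (v : ℝ≥0) (x : ℝ) :
    gaussianPDFReal μ v x ≤ (√(2 * π * v))⁻¹ := by
  rw [gaussianPDFReal]
  refine mul_le_of_le_one_right (by positivity) (Real.exp_le_one_iff.mpr ?_)
  rw [neg_div]
  exact neg_nonpos.mpr (by positivity)

theorem gaussianReal_Ioc_le (μ : ℝ) (hv : v ≠ 0) (c e : ℝ) :
    gaussianReal μ v (Set.Ioc c e) ≤ ENNReal.ofReal ((e - c) / √(2 * π * v)) := by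
  calc gaussianReal μ v (Set.Ioc c e)
      = ∫⁻ x in Set.Ioc c e, gaussianPDF μ v x := gaussianReal_apply μ hv _
    _ ≤ ∫⁻ _ in Set.Ioc c e, ENNReal.ofReal (√(2 * π * v))⁻¹ :=
        lintegral_mono fun x => ENNReal.ofReal_le_ofReal (gaussianPDFReal_le μ v x)
    _ = ENNReal.ofReal ((e - c) / √(2 * π * v)) := by
        rw [setLIntegral_const, Real.volume_Ioc, ← ENNReal.ofReal_mul (by positivity),
          div_eq_inv_mul]

theorem gaussianReal_Iic_le_add (hv : v ≠ 0) {a b : ℝ} (hab : a ≤ b) (m : ℝ) :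
    gaussianReal a v (Set.Iic m)
      ≤ gaussianReal b v (Set.Iic m) + ENNReal.ofReal ((b - a) / √(2 * π * v)) := by
  have hshift : gaussianReal a v = (gaussianReal b v).map (· + (a - b)) := by
    rw [gaussianReal_map_add_const, add_sub_cancel]
  have hpre : (· + (a - b)) ⁻¹' Set.Iic m = Set.Iic (m + (b - a)) := by
    ext x; simp only [Set.mem_preimage, Set.mem_Iic]; constructor <;> intro h <;> linarith
  rw [hshift, Measure.map_apply (measurable_add_const _) measurableSet_Iic, hpre,
    ← Set.Iic_union_Ioc_eq_Iic (by linarith : m ≤ m + (b - a))]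
  refine (measure_union_le _ _).trans (add_le_add le_rfl ?_)
  simpa only [add_sub_cancel_left] using gaussianReal_Ioc_le b hv m (m + (b - a))

theorem gaussianPDFReal_le_gaussianPDFReal_iff (hv : v ≠ 0) {a b : ℝ} (hab : a < b) (x : ℝ) :
    gaussianPDFReal b v x ≤ gaussianPDFReal a v x ↔ x ≤ (a + b) / 2 := by
  rw [gaussianPDFReal, gaussianPDFReal, mul_le_mul_iff_right₀ (by positivity), Real.exp_le_exp,
    div_le_div_iff_of_pos_right (by positivity), neg_le_neg_iff]
  constructor <;> intro h <;> nlinarith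

theorem lintegral_gaussianPDF_sub_le (hv : v ≠ 0) {a b : ℝ} (hab : a ≤ b) :
    ∫⁻ x, gaussianPDF a v x - gaussianPDF b v x ≤ ENNReal.ofReal ((b - a) / √(2 * π * v)) := by
  rcases hab.eq_or_lt with rfl | hlt
  · simp
  have hle_iff : ∀ x, gaussianPDF b v x ≤ gaussianPDF a v x ↔ x ≤ (a + b) / 2 := fun x => by
    rw [gaussianPDF, gaussianPDF, ENNReal.ofReal_le_ofReal_iff (gaussianPDFReal_nonneg _ _ _),
      gaussianPDFReal_le_gaussianPDFReal_iff hv hlt]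
  have hsupp : (fun x => gaussianPDF a v x - gaussianPDF b v x).support ⊆ Set.Iic ((a + b) / 2) :=
    fun x hx => (hle_iff x).mp (tsub_pos_iff_lt.mp (pos_iff_ne_zero.mpr hx)).le
  rw [← setLIntegral_eq_of_support_subset hsupp, lintegral_sub (measurable_gaussianPDF b v)
    (ne_top_of_le_ne_top ENNReal.one_ne_top ((setLIntegral_le_lintegral _ _).trans_eq
      (lintegral_gaussianPDF_eq_one b hv)))
    ((ae_restrict_iff' measurableSet_Iic).mpr (ae_of_all _ fun x => (hle_iff x).mpr)),
    ← gaussianReal_apply a hv, ← gaussianReal_apply b hv, tsub_le_iff_left]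
  exact gaussianReal_Iic_le_add hv hab _

theorem gaussianReal_tvLe (hv : v ≠ 0) (a b : ℝ) :
    TVLe (gaussianReal a v) (gaussianReal b v) (ENNReal.ofReal (|a - b| / √(2 * π * v))) := by
  have of_le : ∀ a b : ℝ, a ≤ b →
      TVLe (gaussianReal a v) (gaussianReal b v) (ENNReal.ofReal (|a - b| / √(2 * π * v))) :=
    fun a b hab => by
      rw [gaussianReal_of_var_ne_zero a hv, gaussianReal_of_var_ne_zero b hv, abs_sub_comm,
        abs_of_nonneg (sub_nonneg.mpr hab)]
      exact (TVLe.withDensity (measurable_gaussianPDF a v) (measurable_gaussianPDF b v)).mono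
        (lintegral_gaussianPDF_sub_le hv hab)
  rcases le_total a b with hab | hba
  · exact of_le a b hab
  · have h := (of_le (-a) (-b) (neg_le_neg hba)).map measurable_neg
    rwa [gaussianReal_map_neg, gaussianReal_map_neg, neg_neg, neg_neg, neg_sub_neg,
      abs_sub_comm] at h

end Gaussian

section GaussianMechanism

variable {T : Type} {n d : ℕ}

def HasL2Sensitivity (f : (Fin n → T) → (Fin d → ℝ)) (s : ℝ) : Prop :=
  ∀ (t : Fin n → T) (i : Fin n) (t' : T),
    √(∑ j, (f t j - f (Function.update t i t') j) ^ 2) ≤ s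

def IsDifferentiallyPrivate {β : Type*} [MeasurableSpace β] (M : (Fin n → T) → Measure β)
    (ε γ : ℝ) : Prop :=
  ∀ (t : Fin n → T) (i : Fin n) (t' : T) (E : Set β), MeasurableSet E →
    exp (-ε) * (M (Function.update t i t') E).toReal - γ ≤ (M t E).toReal ∧
      (M t E).toReal ≤ exp ε * (M (Function.update t i t') E).toReal + γ

theorem HasL2Sensitivity.abs_sub_le {f : (Fin n → T) → (Fin d → ℝ)} {s : ℝ}
    (hf : HasL2Sensitivity f s) (t : Fin n → T) (i : Fin n) (t' : T) (j : Fin d) :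
    |f t j - f (Function.update t i t') j| ≤ s := by
  rw [← Real.sqrt_sq_eq_abs]
  exact (Real.sqrt_le_sqrt (Finset.single_le_sum (fun k _ => sq_nonneg
    (f t k - f (Function.update t i t') k)) (Finset.mem_univ j))).trans (hf t i t')

theorem isDifferentiallyPrivate_zero_of_tvLe {β : Type*} [MeasurableSpace β]
    {M : (Fin n → T) → Measure β} [∀ t, IsFiniteMeasure (M t)] {γ : ℝ} (hγ : 0 ≤ γ)
    (h : ∀ (t : Fin n → T) (i : Fin n) (t' : T),
      TVLe (M t) (M (Function.update t i t')) (ENNReal.ofReal γ)) :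
    IsDifferentiallyPrivate M 0 γ := by
  intro t i t' E hE
  have h_symm := h (Function.update t i t') i (t i)
  rw [Function.update_idem, Function.update_eq_self] at h_symm
  rw [neg_zero, exp_zero, one_mul, sub_le_iff_le_add]
  exact ⟨h_symm.toReal_measure_le hγ hE, (h t i t').toReal_measure_le hγ hE⟩

instance (f : (Fin n → T) → (Fin d → ℝ)) (σ : ℝ) (t : Fin n → T) :
    IsProbabilityMeasure (gaussMech f σ t) :=
  Measure.isProbabilityMeasure_map (by fun_prop)

theorem gaussMech_eq_pi (f : (Fin n → T) → (Fin d → ℝ)) (σ : ℝ) (t : Fin n → T) :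
    gaussMech f σ t = Measure.pi fun j => gaussianReal (f t j) (σ ^ 2).toNNReal :=
  (measurePreserving_pi _ _ fun j => ⟨measurable_const_add (f t j), by
    rw [gaussianReal_map_const_add, zero_add]⟩).map_eq

theorem gaussMech_tvLe {σ : ℝ} (hσ : σ ≠ 0) (f : (Fin n → T) → (Fin d → ℝ)) (t₁ t₂ : Fin n → T) :
    TVLe (gaussMech f σ t₁) (gaussMech f σ t₂)
      (∑ j, ENNReal.ofReal (|f t₁ j - f t₂ j| / √(2 * π * σ ^ 2))) := by
  rw [gaussMech_eq_pi, gaussMech_eq_pi]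
  refine TVLe.pi fun j => ?_
  have h := gaussianReal_tvLe (v := (σ ^ 2).toNNReal) (by simpa using hσ) (f t₁ j) (f t₂ j)
  rwa [Real.coe_toNNReal _ (sq_nonneg σ)] at h

theorem gaussMech_isDifferentiallyPrivate {σ : ℝ} (hσ : σ ≠ 0) {f : (Fin n → T) → (Fin d → ℝ)}
    {s : ℝ} (hs : 0 ≤ s) (hf : HasL2Sensitivity f s) :
    IsDifferentiallyPrivate (gaussMech f σ) 0 (d * s / √(2 * π * σ ^ 2)) := by
  refine isDifferentiallyPrivate_zero_of_tvLe (by positivity) fun t i t' => ?_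
  refine (gaussMech_tvLe hσ f t (Function.update t i t')).mono ?_
  calc ∑ j, ENNReal.ofReal (|f t j - f (Function.update t i t') j| / √(2 * π * σ ^ 2))
      ≤ ∑ _j : Fin d, ENNReal.ofReal (s / √(2 * π * σ ^ 2)) := by
        gcongr with j
        exact hf.abs_sub_le t i t' j
    _ = ENNReal.ofReal (d * s / √(2 * π * σ ^ 2)) := by
        rw [Finset.sum_const, Finset.card_univ, Fintype.card_fin, nsmul_eq_mul,
          ← ENNReal.ofReal_natCast, ← ENNReal.ofReal_mul (by positivity), mul_div_assoc]

end GaussianMechanism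

theorem le_div_sqrt_log_two_mul_sqrt_log {K x : ℝ} (hK : 0 ≤ K) (hx : 2 ≤ x) :
    K ≤ K / √(log 2) * √(log x) := by
  have hlog2 : 0 < √(log 2) := Real.sqrt_pos.mpr (Real.log_pos one_lt_two)
  rw [div_mul_eq_mul_div, le_div_iff₀ hlog2]
  gcongr

/-- **Gaussian noise of fixed variance on a low-sensitivity function.**  Fix `σ > 0` and
`d ∈ ℕ`.  There is a constant `C` (depending only on `σ`) such that for every
`s ∈ (0, 1/2]` and every `f : T^n → ℝ^d` of L² sensitivity at most `s`, the mechanism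
`t ↦ f t + Z` with `Z` i.i.d. `N(0,σ²)` per coordinate is `(ε,γ)`-differentially private
for some `ε, γ ≥ 0` with `ε + γ ≤ C·s·√(log(1/s))`.  In particular, if the sensitivity
is at most `c/n`, the mechanism is `(ε,γ)`-differentially private with
`ε + γ ≤ C'·√(log n)/n` for a uniform constant `C'` and all `n ≥ 2`. -/
theorem gaussMech_fixed_noise_dp (σ : ℝ) (hσ : 0 < σ) (d : ℕ) :
    (∃ C : ℝ, ∀ (T : Type) (n : ℕ) (s : ℝ), 0 < s → s ≤ 1 / 2 →
      ∀ f : (Fin n → T) → (Fin d → ℝ),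
        (∀ (t : Fin n → T) (i : Fin n) (t' : T),
          Real.sqrt (∑ j, (f t j - f (Function.update t i t') j) ^ 2) ≤ s) →
        ∃ ε γ : ℝ, 0 ≤ ε ∧ 0 ≤ γ ∧ ε + γ ≤ C * s * Real.sqrt (Real.log (1 / s)) ∧
          ∀ (t : Fin n → T) (i : Fin n) (t' : T) (E : Set (Fin d → ℝ)), MeasurableSet E →
            Real.exp (-ε) * (gaussMech f σ (Function.update t i t') E).toReal - γ
                ≤ (gaussMech f σ t E).toReal ∧
              (gaussMech f σ t E).toReal
                ≤ Real.exp ε * (gaussMech f σ (Function.update t i t') E).toReal + γ) ∧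
    (∀ c : ℝ, 0 < c → ∃ C' : ℝ, ∀ (T : Type) (n : ℕ), 2 ≤ n →
      ∀ f : (Fin n → T) → (Fin d → ℝ),
        (∀ (t : Fin n → T) (i : Fin n) (t' : T),
          Real.sqrt (∑ j, (f t j - f (Function.update t i t') j) ^ 2) ≤ c / n) →
        ∃ ε γ : ℝ, 0 ≤ ε ∧ 0 ≤ γ ∧ ε + γ ≤ C' * Real.sqrt (Real.log n) / n ∧
          ∀ (t : Fin n → T) (i : Fin n) (t' : T) (E : Set (Fin d → ℝ)), MeasurableSet E →
            Real.exp (-ε) * (gaussMech f σ (Function.update t i t') E).toReal - γ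
                ≤ (gaussMech f σ t E).toReal ∧
              (gaussMech f σ t E).toReal
                ≤ Real.exp ε * (gaussMech f σ (Function.update t i t') E).toReal + γ) := by
  refine ⟨⟨d / √(2 * π * σ ^ 2) / √(log 2), fun T n s hs hs2 f hf => ?_⟩,
    fun c hc => ⟨d * c / √(2 * π * σ ^ 2) / √(log 2), fun T n hn f hf => ?_⟩⟩
  · refine ⟨0, _, le_rfl, by positivity, ?_, gaussMech_isDifferentiallyPrivate hσ.ne' hs.le hf⟩
    have h2s : 2 ≤ 1 / s := by rw [le_div_iff₀ hs]; linarith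
    calc 0 + d * s / √(2 * π * σ ^ 2)
        ≤ d * s / √(2 * π * σ ^ 2) / √(log 2) * √(log (1 / s)) := by
          rw [zero_add]; exact le_div_sqrt_log_two_mul_sqrt_log (by positivity) h2s
      _ = _ := by ring
  · have hn2 : (2 : ℝ) ≤ n := by exact_mod_cast hn
    refine ⟨0, _, le_rfl, by positivity,
      ?_, gaussMech_isDifferentiallyPrivate hσ.ne' (by positivity) hf⟩
    calc 0 + d * (c / n) / √(2 * π * σ ^ 2)
        ≤ d * (c / n) / √(2 * π * σ ^ 2) / √(log 2) * √(log n) := by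
          rw [zero_add]; exact le_div_sqrt_log_two_mul_sqrt_log (by positivity) hn2
      _ = _ := by ring
end

section
/- Fix an n-player stage game in which each player has k actions and payoffs lie in [0,1], and suppose the game is μ-sensitive: for all players i ≠ j, all actions a_i, a_j, a_j', and all profiles a_{−ij} of the remaining players, |u_i(a_i, a_j, a_{−ij}) − u_i(a_i, a_j', a_{−ij})| ≤ μ. Then the function mapping an action profile a to the vector in ℝ^{n·k} of all counterfactual payoffs (u_i(a', a_{−i}))_{i ≤ n, a' ∈ A_i} has L² sensitivity at most √(n·k)·μ with respect to unilateral changes of a single player's action. Consequently, the private monitoring structure in which each player i receives the signal (u_i(a', a_{−i}) + N(0,σ²))_{a' ∈ A_i}, with all noise coordinates i.i.d. Gaussian with fixed variance σ² > 0, is (ε,γ)-differentially private with ε + γ = O(μ·√(n·k·log(1/μ))) as μ → 0. -/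
/-!
Changing one player's action moves every counterfactual payoff by at most `μ`: the deviator's
own coordinates `u_j(a', a_{-j})` do not depend on her action, and the other coordinates are
controlled by `μ`-sensitivity. Summing squares gives the L² bound.

For privacy, the two signal distributions are products of one-dimensional Gaussians of variance
`v` whose means differ by at most `μ`. Two such Gaussians are within total variation
`|c - c'| / √(2πv)`: the excess of one density over the other lives on a half-line, where it
integrates to the mass of an interval of length `|c - c'|`. Total variation is subadditive over
independent coordinates, which gives `(0, nkμ/√(2πσ²))`-privacy, and for `μ ≤ 1/2` we have
`μ ≤ μ √(log (1/μ) / log 2)`.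
-/

open MeasureTheory ProbabilityTheory
open scoped BigOperators

/-- The counterfactual payoff vector of an action profile `a`: the vector in `ℝ^{n·k}`
whose `(i, a')` coordinate is `u_i(a', a_{-i})`, the payoff player `i` would have received
by playing `a'` against the others' play. -/
def cfVector {n k : ℕ} (u : Fin n → (Fin n → Fin k) → ℝ) (a : Fin n → Fin k) :
    Fin n × Fin k → ℝ :=
  fun p => u p.1 (Function.update a p.1 p.2)

/-- The counterfactual-payoff private monitoring structure: each player `i` receives the
signal `(u_i(a', a_{-i}) + N(0,σ²))_{a'}`, with all `n·k` noise coordinates i.i.d.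
Gaussian. -/
noncomputable def cfMech {n k : ℕ} (u : Fin n → (Fin n → Fin k) → ℝ) (σ : ℝ)
    (a : Fin n → Fin k) : Measure (Fin n × Fin k → ℝ) :=
  Measure.map (fun z => cfVector u a + z)
    (Measure.pi fun _ : Fin n × Fin k => gaussianReal 0 (σ ^ 2).toNNReal)

open scoped ENNReal NNReal

namespace ProbabilityTheory

open Real

lemma gaussianPDFReal_le_inv_sqrt (c : ℝ) (v : ℝ≥0) (x : ℝ) :
    gaussianPDFReal c v x ≤ (√(2 * π * v))⁻¹ := by
  refine mul_le_of_le_one_right (by positivity) (exp_le_one_iff.mpr ?_)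
  exact div_nonpos_of_nonpos_of_nonneg (neg_nonpos.mpr (sq_nonneg _)) (by positivity)

lemma gaussianPDFReal_le_of_sq_le {c c' x : ℝ} (v : ℝ≥0) (h : (x - c) ^ 2 ≤ (x - c') ^ 2) :
    gaussianPDFReal c' v x ≤ gaussianPDFReal c v x := by
  refine mul_le_mul_of_nonneg_left (exp_le_exp.mpr ?_) (by positivity)
  exact div_le_div_of_nonneg_right (neg_le_neg h) (by positivity)

lemma gaussianReal_apply_le_mul_volume (c : ℝ) {v : ℝ≥0} (hv : v ≠ 0) (s : Set ℝ) :
    gaussianReal c v s ≤ ENNReal.ofReal (√(2 * π * v))⁻¹ * volume s := by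
  rw [gaussianReal_apply c hv, ← setLIntegral_const]
  exact lintegral_mono fun x => ENNReal.ofReal_le_ofReal (gaussianPDFReal_le_inv_sqrt c v x)

/-- The excess of the density of `N(c, v)` over that of `N(c', v)` lives on `[m, ∞)`, `m` the
midpoint, and has mass `N(c, v)[m, ∞) - N(c', v)[m, ∞) = N(c, v)[m, m + (c - c'))`. -/
lemma lintegral_gaussianPDF_tsub_le_of_le {c c' : ℝ} {v : ℝ≥0} (hv : v ≠ 0) (h : c' ≤ c) :
    ∫⁻ x, (gaussianPDF c v x - gaussianPDF c' v x)
      ≤ ENNReal.ofReal ((c - c') / √(2 * π * v)) := by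
  set m := (c + c') / 2 with hm
  have hsq : ∀ x, (x - c') ^ 2 - (x - c) ^ 2 = 2 * (c - c') * (x - m) := fun x => by
    rw [hm]; ring
  have hsupp : (fun x => gaussianPDF c v x - gaussianPDF c' v x)
      = (Set.Ici m).indicator (fun x => gaussianPDF c v x - gaussianPDF c' v x) := by
    ext x
    by_cases hx : m ≤ x
    · rw [Set.indicator_of_mem (Set.mem_Ici.mpr hx)]
    · rw [Set.indicator_of_notMem (by simpa using hx)]
      exact tsub_eq_zero_of_le <| ENNReal.ofReal_le_ofReal <|
        gaussianPDFReal_le_of_sq_le v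
          (by nlinarith [hsq x, mul_nonneg (sub_nonneg.mpr h) (sub_nonneg.mpr (le_of_not_ge hx))])
  have hle : ∀ x ∈ Set.Ici m, gaussianPDF c' v x ≤ gaussianPDF c v x := fun x hx =>
    ENNReal.ofReal_le_ofReal <| gaussianPDFReal_le_of_sq_le v
      (by nlinarith [hsq x, mul_nonneg (sub_nonneg.mpr h) (sub_nonneg.mpr (Set.mem_Ici.mp hx))])
  have hshift : gaussianReal c' v (Set.Ici m) = gaussianReal c v (Set.Ici (m + (c - c'))) := by
    have hmap := gaussianReal_map_add_const (μ := c) (v := v) (c' - c)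
    rw [add_sub_cancel] at hmap
    rw [← hmap, Measure.map_apply (measurable_add_const _) measurableSet_Ici]
    congr 1
    ext x
    simp only [Set.mem_preimage, Set.mem_Ici]
    constructor <;> intro <;> linarith
  calc ∫⁻ x, (gaussianPDF c v x - gaussianPDF c' v x)
      = gaussianReal c v (Set.Ici m) - gaussianReal c' v (Set.Ici m) := by
        rw [gaussianReal_apply c hv, gaussianReal_apply c' hv, hsupp,
          lintegral_indicator measurableSet_Ici, lintegral_sub (measurable_gaussianPDF c' v)
            (gaussianReal_apply c' hv _ ▸ measure_ne_top _ _)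
            (ae_restrict_of_forall_mem measurableSet_Ici hle)]
    _ = gaussianReal c v (Set.Ico m (m + (c - c'))) := by
        rw [hshift, ← Set.Ici_sdiff_Ici,
          measure_sdiff (Set.Ici_subset_Ici.mpr (by linarith)) measurableSet_Ici.nullMeasurableSet
            (measure_ne_top _ _)]
    _ ≤ ENNReal.ofReal (√(2 * π * v))⁻¹ * volume (Set.Ico m (m + (c - c'))) :=
        gaussianReal_apply_le_mul_volume c hv _
    _ = ENNReal.ofReal ((c - c') / √(2 * π * v)) := by
        rw [Real.volume_Ico, add_sub_cancel_left, ← ENNReal.ofReal_mul (by positivity),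
          inv_mul_eq_div]

lemma lintegral_gaussianReal_le_of_le {c c' : ℝ} {v : ℝ≥0} (hv : v ≠ 0) (h : c' ≤ c)
    {g : ℝ → ℝ≥0∞} (hg : Measurable g) (hg1 : ∀ x, g x ≤ 1) :
    ∫⁻ x, g x ∂gaussianReal c v
      ≤ ∫⁻ x, g x ∂gaussianReal c' v + ENNReal.ofReal ((c - c') / √(2 * π * v)) := by
  have hpt : ∀ x, gaussianPDF c v x * g x
      ≤ gaussianPDF c' v x * g x + (gaussianPDF c v x - gaussianPDF c' v x) := fun x =>
    calc gaussianPDF c v x * g x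
        ≤ (gaussianPDF c' v x + (gaussianPDF c v x - gaussianPDF c' v x)) * g x :=
          mul_le_mul_left le_add_tsub _
      _ ≤ gaussianPDF c' v x * g x + (gaussianPDF c v x - gaussianPDF c' v x) := by
          rw [add_mul]
          exact add_le_add_right (mul_le_of_le_one_right' (hg1 x)) _
  rw [gaussianReal_of_var_ne_zero c hv, gaussianReal_of_var_ne_zero c' hv,
    lintegral_withDensity_eq_lintegral_mul _ (measurable_gaussianPDF _ _) hg,
    lintegral_withDensity_eq_lintegral_mul _ (measurable_gaussianPDF _ _) hg]
  calc ∫⁻ x, gaussianPDF c v x * g x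
      ≤ ∫⁻ x, (gaussianPDF c' v x * g x + (gaussianPDF c v x - gaussianPDF c' v x)) :=
        lintegral_mono hpt
    _ = (∫⁻ x, gaussianPDF c' v x * g x) + ∫⁻ x, (gaussianPDF c v x - gaussianPDF c' v x) :=
        lintegral_add_right _ ((measurable_gaussianPDF c v).sub (measurable_gaussianPDF c' v))
    _ ≤ _ := add_le_add_right (lintegral_gaussianPDF_tsub_le_of_le hv h) _

lemma lintegral_gaussianReal_le (c c' : ℝ) {v : ℝ≥0} (hv : v ≠ 0)
    {g : ℝ → ℝ≥0∞} (hg : Measurable g) (hg1 : ∀ x, g x ≤ 1) :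
    ∫⁻ x, g x ∂gaussianReal c v
      ≤ ∫⁻ x, g x ∂gaussianReal c' v + ENNReal.ofReal (|c - c'| / √(2 * π * v)) := by
  rcases le_total c' c with h | h
  · rw [abs_of_nonneg (sub_nonneg.mpr h)]
    exact lintegral_gaussianReal_le_of_le hv h hg hg1
  · have hneg (d : ℝ) : ∫⁻ x, g x ∂gaussianReal d v = ∫⁻ x, g (-x) ∂gaussianReal (-d) v := by
      rw [← lintegral_map hg measurable_neg, gaussianReal_map_neg, neg_neg]
    rw [hneg c, hneg c', abs_sub_comm, abs_of_nonneg (sub_nonneg.mpr h), ← neg_sub_neg]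
    exact lintegral_gaussianReal_le_of_le hv (neg_le_neg h) (hg.comp measurable_neg)
      fun x => hg1 (-x)

end ProbabilityTheory

namespace MeasureTheory

variable {ι : Type*} {X : ι → Type*} [∀ i, MeasurableSpace (X i)]
  {μ ν : (i : ι) → Measure (X i)} [∀ i, IsProbabilityMeasure (μ i)]
  [∀ i, IsProbabilityMeasure (ν i)] {δ : ι → ℝ≥0∞}

lemma lmarginal_le_one [DecidableEq ι] {f : ((i : ι) → X i) → ℝ≥0∞} (hf1 : ∀ x, f x ≤ 1)
    (s : Finset ι) (x : (i : ι) → X i) : (∫⋯∫⁻_s, f ∂ν) x ≤ 1 :=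
  calc (∫⋯∫⁻_s, f ∂ν) x ≤ ∫⁻ _, 1 ∂Measure.pi fun i : s => ν i :=
        lintegral_mono fun _ => hf1 _
    _ = 1 := by simp

lemma lmarginal_le_add_sum [DecidableEq ι]
    (hδ : ∀ i (g : X i → ℝ≥0∞), Measurable g → (∀ y, g y ≤ 1) →
      ∫⁻ y, g y ∂μ i ≤ ∫⁻ y, g y ∂ν i + δ i)
    {f : ((i : ι) → X i) → ℝ≥0∞} (hf : Measurable f) (hf1 : ∀ x, f x ≤ 1)
    (s : Finset ι) (x : (i : ι) → X i) :
    (∫⋯∫⁻_s, f ∂μ) x ≤ (∫⋯∫⁻_s, f ∂ν) x + ∑ i ∈ s, δ i := by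
  induction s using Finset.induction generalizing x with
  | empty => simp
  | insert i s hi ih =>
    rw [lmarginal_insert _ hf hi, lmarginal_insert _ hf hi, Finset.sum_insert hi]
    calc ∫⁻ y, (∫⋯∫⁻_s, f ∂μ) (Function.update x i y) ∂μ i
        ≤ ∫⁻ y, ((∫⋯∫⁻_s, f ∂ν) (Function.update x i y) + ∑ j ∈ s, δ j) ∂μ i :=
          lintegral_mono fun y => ih _
      _ = ∫⁻ y, (∫⋯∫⁻_s, f ∂ν) (Function.update x i y) ∂μ i + ∑ j ∈ s, δ j := by
          rw [lintegral_add_right _ measurable_const, lintegral_const, measure_univ, mul_one]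
      _ ≤ ∫⁻ y, (∫⋯∫⁻_s, f ∂ν) (Function.update x i y) ∂ν i + δ i + ∑ j ∈ s, δ j := by
          gcongr
          exact hδ i _ ((hf.lmarginal ν).comp (measurable_update x))
            fun y => lmarginal_le_one hf1 s _
      _ = _ := add_assoc _ _ _

variable [Fintype ι]

lemma pi_apply_le_add_sum
    (hδ : ∀ i (g : X i → ℝ≥0∞), Measurable g → (∀ y, g y ≤ 1) →
      ∫⁻ y, g y ∂μ i ≤ ∫⁻ y, g y ∂ν i + δ i)
    {E : Set ((i : ι) → X i)} (hE : MeasurableSet E) :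
    Measure.pi μ E ≤ Measure.pi ν E + ∑ i, δ i := by
  classical
  have hind : ∀ x, E.indicator 1 x ≤ (1 : ℝ≥0∞) := fun x => by
    by_cases hx : x ∈ E <;> simp [hx]
  obtain ⟨x⟩ := nonempty_of_isProbabilityMeasure (Measure.pi ν)
  rw [← lintegral_indicator_one hE, ← lintegral_indicator_one hE,
    lintegral_eq_lmarginal_univ x, lintegral_eq_lmarginal_univ x]
  exact lmarginal_le_add_sum hδ (measurable_one.indicator hE) hind Finset.univ x

end MeasureTheory

namespace ProbabilityTheory

open Real

variable {ι : Type*} [Fintype ι]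

lemma map_const_add_pi_gaussianReal (v : ℝ≥0) (w : ι → ℝ) :
    (Measure.pi fun _ : ι => gaussianReal 0 v).map (w + ·)
      = Measure.pi fun i => gaussianReal (w i) v := by
  have h : ∀ i, MeasurePreserving (w i + ·) (gaussianReal 0 v) (gaussianReal (w i) v) :=
    fun i => ⟨measurable_const_add _, by rw [gaussianReal_map_const_add, zero_add]⟩
  exact (measurePreserving_pi _ _ h).map_eq

lemma map_const_add_pi_gaussianReal_apply_le {v : ℝ≥0} (hv : v ≠ 0) {w w' : ι → ℝ} {μ : ℝ}
    (hμ : ∀ i, |w i - w' i| ≤ μ) {E : Set (ι → ℝ)} (hE : MeasurableSet E) :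
    (Measure.pi fun _ : ι => gaussianReal 0 v).map (w + ·) E
      ≤ (Measure.pi fun _ : ι => gaussianReal 0 v).map (w' + ·) E
        + ENNReal.ofReal (Fintype.card ι * μ / √(2 * π * v)) := by
  rw [map_const_add_pi_gaussianReal, map_const_add_pi_gaussianReal]
  refine (pi_apply_le_add_sum
    (fun i _ hg hg1 => lintegral_gaussianReal_le (w i) (w' i) hv hg hg1) hE).trans ?_
  gcongr
  rw [← ENNReal.ofReal_sum_of_nonneg fun i _ => by positivity]
  refine ENNReal.ofReal_le_ofReal ?_
  calc ∑ i, |w i - w' i| / √(2 * π * v) ≤ ∑ _ : ι, μ / √(2 * π * v) :=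
        Finset.sum_le_sum fun i _ => by gcongr; exact hμ i
    _ = Fintype.card ι * μ / √(2 * π * v) := by
        rw [Finset.sum_const, Finset.card_univ, nsmul_eq_mul, mul_div_assoc]

end ProbabilityTheory

lemma sqrt_sum_sq_le_sqrt_card_mul {ι : Type*} [Fintype ι] {f : ι → ℝ} {μ : ℝ} (hμ : 0 ≤ μ)
    (hf : ∀ i, |f i| ≤ μ) : √(∑ i, f i ^ 2) ≤ √(Fintype.card ι) * μ := by
  rw [← Real.sqrt_sq hμ, ← Real.sqrt_mul (Nat.cast_nonneg _)]
  refine Real.sqrt_le_sqrt ?_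
  calc ∑ i, f i ^ 2 ≤ ∑ _ : ι, μ ^ 2 := Finset.sum_le_sum fun i _ => sq_le_sq.mpr <| by
        simpa [abs_of_nonneg hμ] using hf i
    _ = Fintype.card ι * μ ^ 2 := by rw [Finset.sum_const, Finset.card_univ, nsmul_eq_mul]

lemma abs_cfVector_sub_cfVector_update_le {n k : ℕ} {u : Fin n → (Fin n → Fin k) → ℝ}
    {μ : ℝ} (hμ : 0 ≤ μ)
    (hsens : ∀ (i j : Fin n), i ≠ j → ∀ (a : Fin n → Fin k) (b : Fin k),
      |u i a - u i (Function.update a j b)| ≤ μ)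
    (a : Fin n → Fin k) (j : Fin n) (b : Fin k) (p : Fin n × Fin k) :
    |cfVector u a p - cfVector u (Function.update a j b) p| ≤ μ := by
  by_cases h : p.1 = j
  · simp [cfVector, h, hμ]
  · rw [cfVector, cfVector, Function.update_comm (Ne.symm h)]
    exact hsens p.1 j h _ b

lemma natCast_mul_le_mul_sqrt_log {μ : ℝ} (hμ : 0 < μ) (hμ2 : μ ≤ 1 / 2) (N : ℕ) :
    N * μ ≤ N / √(Real.log 2) * μ * √(N * Real.log (1 / μ)) := by
  rcases N.eq_zero_or_pos with rfl | hN
  · simp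
  have hlog2 : 0 < √(Real.log 2) := Real.sqrt_pos.mpr (Real.log_pos one_lt_two)
  have hlog : Real.log 2 ≤ N * Real.log (1 / μ) := by
    have : Real.log 2 ≤ Real.log (1 / μ) :=
      Real.log_le_log two_pos (by rw [le_div_iff₀ hμ]; linarith)
    have : (1 : ℝ) ≤ N := by exact_mod_cast hN
    nlinarith [Real.log_pos one_lt_two]
  calc (N : ℝ) * μ = N / √(Real.log 2) * μ * √(Real.log 2) := by field_simp
    _ ≤ N / √(Real.log 2) * μ * √(N * Real.log (1 / μ)) := by gcongr

lemma cfMech_apply_toReal_le {n k : ℕ} (u : Fin n → (Fin n → Fin k) → ℝ) {σ : ℝ}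
    (hσ : σ ≠ 0) {μ : ℝ} (hμ0 : 0 ≤ μ) {a a' : Fin n → Fin k}
    (hμ : ∀ p, |cfVector u a p - cfVector u a' p| ≤ μ)
    {E : Set (Fin n × Fin k → ℝ)} (hE : MeasurableSet E) :
    (cfMech u σ a E).toReal
      ≤ (cfMech u σ a' E).toReal + n * k * μ / √(2 * Real.pi * (σ ^ 2).toNNReal) := by
  have hv : (σ ^ 2).toNNReal ≠ 0 := by simpa using hσ
  have h := map_const_add_pi_gaussianReal_apply_le hv hμ hE
  rw [Fintype.card_prod, Fintype.card_fin, Fintype.card_fin, Nat.cast_mul] at h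
  unfold cfMech
  rw [← ENNReal.toReal_ofReal (by positivity : 0 ≤ n * k * μ / √(2 * Real.pi * (σ ^ 2).toNNReal)),
    ← ENNReal.toReal_add (measure_ne_top _ _) ENNReal.ofReal_ne_top]
  exact ENNReal.toReal_mono (by finiteness) h

/-- **Counterfactual payoffs in a `μ`-sensitive game are differentially private.**
In an `n`-player, `k`-action stage game with payoffs in `[0,1]` that is `μ`-sensitive,
the counterfactual payoff vector has L² sensitivity at most `√(n·k)·μ` with respect to
unilateral deviations, and consequently the monitoring structure adding i.i.d. `N(0,σ²)`
noise to it is `(ε,γ)`-differentially private with `ε + γ = O(μ·√(n·k·log(1/μ)))` as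
`μ → 0`. -/
theorem cfMech_dp (σ : ℝ) (hσ : 0 < σ) (n k : ℕ) :
    ∃ C : ℝ, ∀ μ : ℝ, 0 < μ → μ ≤ 1 / 2 →
      ∀ u : Fin n → (Fin n → Fin k) → ℝ,
        (∀ i a, u i a ∈ Set.Icc (0 : ℝ) 1) →
        (∀ (i j : Fin n), i ≠ j → ∀ (a : Fin n → Fin k) (b : Fin k),
          |u i a - u i (Function.update a j b)| ≤ μ) →
        -- L² sensitivity of the counterfactual payoff vector
        (∀ (a : Fin n → Fin k) (j : Fin n) (b : Fin k),
          Real.sqrt (∑ p : Fin n × Fin k,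
              (cfVector u a p - cfVector u (Function.update a j b) p) ^ 2)
            ≤ Real.sqrt (n * k) * μ) ∧
        -- differential privacy of the Gaussian counterfactual-payoff signals
        ∃ ε γ : ℝ, 0 ≤ ε ∧ 0 ≤ γ ∧
          ε + γ ≤ C * μ * Real.sqrt (n * k * Real.log (1 / μ)) ∧
          ∀ (a : Fin n → Fin k) (j : Fin n) (b : Fin k)
            (E : Set (Fin n × Fin k → ℝ)), MeasurableSet E →
            Real.exp (-ε) * (cfMech u σ (Function.update a j b) E).toReal - γ
                ≤ (cfMech u σ a E).toReal ∧
              (cfMech u σ a E).toReal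
                ≤ Real.exp ε * (cfMech u σ (Function.update a j b) E).toReal + γ := by
  set s := √(2 * Real.pi * (σ ^ 2).toNNReal)
  refine ⟨n * k / √(Real.log 2) / s, fun μ hμ hμ2 u _ hsens => ?_⟩
  have hdiff := abs_cfVector_sub_cfVector_update_le hμ.le hsens
  refine ⟨fun a j b => ?_, 0, n * k * μ / s, le_rfl, by positivity, ?_, fun a j b E hE => ?_⟩
  · simpa [Fintype.card_prod] using sqrt_sum_sq_le_sqrt_card_mul hμ.le (hdiff a j b)
  · calc 0 + n * k * μ / s = ((n * k : ℕ) * μ) / s := by push_cast; ring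
      _ ≤ ((n * k : ℕ) / √(Real.log 2) * μ * √((n * k : ℕ) * Real.log (1 / μ))) / s :=
          div_le_div_of_nonneg_right (natCast_mul_le_mul_sqrt_log hμ hμ2 (n * k))
            (Real.sqrt_nonneg _)
      _ = _ := by push_cast; ring
  · rw [neg_zero, Real.exp_zero, one_mul]
    refine ⟨?_, cfMech_apply_toReal_le u hσ.ne' hμ.le (hdiff a j b) hE⟩
    have := cfMech_apply_toReal_le u hσ.ne' hμ.le
      (fun p => abs_sub_comm (cfVector u a p) _ ▸ hdiff a j b p) hE
    linarith
end

section
/- Let M¹,…,M^k be families of probability distributions indexed by inputs D ∈ T^n such that each M^i is (ε_i, γ_i)-differentially private with ε_i ≤ ε' for all i. Then for any γ ∈ (0,1], the composed mechanism M_D = (M¹_D, …, M^k_D) (an independent tuple of samples from the k mechanisms on the same input) is (ε, γ + Σ_{i=1}^k γ_i)-differentially private for ε = √(2·log(1/γ)·k)·ε' + k·ε'·(e^{ε'} − 1). -/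
/-
Each neighbouring pair `(μᵢ, νᵢ)` of output distributions is first replaced, at total-variation
cost `γᵢ`, by a distribution `μ̃ᵢ` whose log-density `Xᵢ` with respect to `νᵢ` satisfies
`|Xᵢ| ≤ ε'`. The product of the `μ̃ᵢ` has log-density `∑ Xᵢ` with respect to the product of the
`νᵢ`. Under it the `Xᵢ` are independent, bounded by `ε'`, and have means
`KL(μ̃ᵢ ‖ νᵢ) ≤ ε' (e^ε' - 1)`, so by Hoeffding's inequality `∑ Xᵢ` exceeds
`ε = √(2 log(1/γ) k) ε' + k ε' (e^ε' - 1)` with probability at most `γ`; off that event the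
density is at most `e^ε`.
-/

open MeasureTheory
open scoped BigOperators

/-- A family of probability distributions `M` indexed by inputs `D ∈ T^n` is
`(ε,γ)`-differentially private if for all inputs differing in a single coordinate and
all measurable events `E`:
`exp(-ε)·M_{D'}(E) - γ ≤ M_D(E) ≤ exp(ε)·M_{D'}(E) + γ`. -/
def DiffPrivate {T : Type*} {n : ℕ} {O : Type*} [MeasurableSpace O]
    (ε γ : ℝ) (M : (Fin n → T) → Measure O) : Prop :=
  ∀ (D : Fin n → T) (i : Fin n) (t' : T) (E : Set O), MeasurableSet E →
    Real.exp (-ε) * (M (Function.update D i t') E).toReal - γ ≤ (M D E).toReal ∧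
    (M D E).toReal ≤ Real.exp ε * (M (Function.update D i t') E).toReal + γ

open ProbabilityTheory Real Set
open scoped ENNReal

section ApproxDominated

variable {Ω : Type*} [MeasurableSpace Ω] {ε γ : ℝ} {μ ν : Measure Ω}

/-- One of the two directions of `(ε, γ)`-indistinguishability of `μ` and `ν`. -/
def ApproxDominated (ε γ : ℝ) (μ ν : Measure Ω) : Prop :=
  ∀ E, MeasurableSet E → μ.real E ≤ exp ε * ν.real E + γ

theorem ApproxDominated.nonneg (h : ApproxDominated ε γ μ ν) : 0 ≤ γ := by
  simpa using h ∅ .empty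

theorem ApproxDominated.mono {ε' : ℝ} (h : ApproxDominated ε γ μ ν) (hε : ε ≤ ε') :
    ApproxDominated ε' γ μ ν := fun E hE =>
  (h E hE).trans (by gcongr)

theorem ApproxDominated.exp_neg_mul_sub_le (h : ApproxDominated ε γ μ ν) (hε : 0 ≤ ε)
    {E : Set Ω} (hE : MeasurableSet E) : exp (-ε) * μ.real E - γ ≤ ν.real E := by
  have := mul_le_mul_of_nonneg_left (h E hE) (exp_pos (-ε)).le
  rw [mul_add, ← mul_assoc, ← exp_add, neg_add_cancel, exp_zero, one_mul] at this
  nlinarith [exp_le_one_iff.2 (neg_nonpos.2 hε), h.nonneg]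

end ApproxDominated

section DiffPrivate

variable {T O : Type*} {n : ℕ} [MeasurableSpace O] {ε γ : ℝ} {M : (Fin n → T) → Measure O}

theorem DiffPrivate.approxDominated (h : DiffPrivate ε γ M) (D : Fin n → T) (i : Fin n) (t : T) :
    ApproxDominated ε γ (M D) (M (Function.update D i t)) ∧
      ApproxDominated ε γ (M (Function.update D i t)) (M D) :=
  ⟨fun E hE => (h D i t E hE).2,
    fun E hE => by simpa [measureReal_def] using (h (Function.update D i t) i (D i) E hE).2⟩

theorem diffPrivate_of_approxDominated (hε : 0 ≤ ε)
    (h : ∀ D i t, ApproxDominated ε γ (M D) (M (Function.update D i t))) : DiffPrivate ε γ M :=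
  fun D i t E hE =>
    ⟨by simpa [measureReal_def] using (h (Function.update D i t) i (D i)).exp_neg_mul_sub_le hε hE,
      h D i t E hE⟩

end DiffPrivate

section AdditiveComposition

variable {α β : Type*} [MeasurableSpace α] [MeasurableSpace β] {δ : ℝ≥0∞}

theorem MeasureTheory.Measure.prod_apply_le_add_left {μ μ' : Measure α} [SFinite μ] [SFinite μ']
    (ρ : Measure β) [IsProbabilityMeasure ρ] (h : ∀ E, MeasurableSet E → μ E ≤ μ' E + δ)
    {E : Set (α × β)} (hE : MeasurableSet E) : μ.prod ρ E ≤ μ'.prod ρ E + δ := by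
  rw [prod_apply_symm hE, prod_apply_symm hE]
  calc ∫⁻ y, μ ((·, y) ⁻¹' E) ∂ρ ≤ ∫⁻ y, (μ' ((·, y) ⁻¹' E) + δ) ∂ρ :=
        lintegral_mono fun y => h _ (measurable_prodMk_right hE)
    _ = _ := by rw [lintegral_add_right _ measurable_const, lintegral_const, measure_univ, mul_one]

theorem MeasureTheory.Measure.prod_apply_le_add_right (ρ : Measure α) [IsProbabilityMeasure ρ]
    {μ μ' : Measure β} [SFinite μ] [SFinite μ'] (h : ∀ E, MeasurableSet E → μ E ≤ μ' E + δ)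
    {E : Set (α × β)} (hE : MeasurableSet E) : ρ.prod μ E ≤ ρ.prod μ' E + δ := by
  rw [prod_apply hE, prod_apply hE]
  calc ∫⁻ x, μ (Prod.mk x ⁻¹' E) ∂ρ ≤ ∫⁻ x, (μ' (Prod.mk x ⁻¹' E) + δ) ∂ρ :=
        lintegral_mono fun x => h _ (measurable_prodMk_left hE)
    _ = _ := by rw [lintegral_add_right _ measurable_const, lintegral_const, measure_univ, mul_one]

end AdditiveComposition

theorem MeasureTheory.Measure.pi_apply_le_add_sum {k : ℕ} {O : Fin k → Type*}
    [∀ i, MeasurableSpace (O i)] {μ μ' : ∀ i, Measure (O i)} [∀ i, IsProbabilityMeasure (μ i)]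
    [∀ i, IsProbabilityMeasure (μ' i)] {δ : Fin k → ℝ≥0∞}
    (h : ∀ i E, MeasurableSet E → μ i E ≤ μ' i E + δ i) {E : Set (∀ i, O i)}
    (hE : MeasurableSet E) : Measure.pi μ E ≤ Measure.pi μ' E + ∑ i, δ i := by
  induction k with
  | zero => simp [pi_of_empty μ, pi_of_empty μ']
  | succ k ih =>
    set e := MeasurableEquiv.piFinSuccAbove O 0
    have hsplit : ∀ (m : ∀ i, Measure (O i)) [∀ i, IsProbabilityMeasure (m i)],
        Measure.pi m E = ((m 0).prod (Measure.pi fun j => m (Fin.succAbove 0 j))) (e.symm ⁻¹' E) :=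
      fun m _ => ((measurePreserving_piFinSuccAbove m 0).symm _).measure_preimage_equiv E |>.symm
    have hE' : MeasurableSet (e.symm ⁻¹' E) := e.symm.measurable hE
    rw [hsplit μ, hsplit μ', Fin.sum_univ_succAbove _ 0, add_comm (δ 0), ← add_assoc]
    calc ((μ 0).prod (Measure.pi fun j => μ (Fin.succAbove 0 j))) (e.symm ⁻¹' E)
        ≤ ((μ' 0).prod (Measure.pi fun j => μ (Fin.succAbove 0 j))) (e.symm ⁻¹' E) + δ 0 :=
          prod_apply_le_add_left _ (h 0) hE'
      _ ≤ _ := by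
          gcongr
          exact prod_apply_le_add_right (μ' 0) (fun E hE => ih (fun j => h _) hE) hE'

theorem Real.exp_sub_one_mul_self_le {u ε : ℝ} (hu : |u| ≤ ε) :
    (exp u - 1) * u ≤ ε * (exp ε - 1) := by
  obtain ⟨hlo, hhi⟩ := abs_le.mp hu
  have hε : ε + 1 ≤ exp ε := add_one_le_exp ε
  rcases le_total 0 u with hu0 | hu0
  · have : exp u ≤ exp ε := exp_le_exp.mpr hhi
    nlinarith [one_le_exp hu0]
  · have : u + 1 ≤ exp u := add_one_le_exp u
    nlinarith [exp_le_one_iff.mpr hu0]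

section LogDensity

variable {Ω : Type*} [MeasurableSpace Ω] {ν : Measure Ω} {X : Ω → ℝ} {ε : ℝ}

noncomputable def MeasureTheory.Measure.withLogDensity (ν : Measure Ω) (X : Ω → ℝ) : Measure Ω :=
  ν.withDensity fun x => ENNReal.ofReal (exp (X x))

theorem integrable_exp_of_abs_le [IsFiniteMeasure ν] (hXm : Measurable X) (hX : ∀ x, |X x| ≤ ε) :
    Integrable (fun x => exp (X x)) ν :=
  .of_bound (by fun_prop) (exp ε) (ae_of_all _ fun x => by
    rw [norm_of_nonneg (exp_pos _).le]; exact exp_le_exp.mpr (abs_le.mp (hX x)).2)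

theorem measureReal_withLogDensity (hX : Integrable (fun x => exp (X x)) ν) {E : Set Ω}
    (hE : MeasurableSet E) : (ν.withLogDensity X).real E = ∫ x in E, exp (X x) ∂ν := by
  rw [measureReal_def, Measure.withLogDensity, withDensity_apply _ hE,
    ← ofReal_integral_eq_lintegral_ofReal hX.integrableOn (ae_of_all _ fun x => (exp_pos _).le),
    ENNReal.toReal_ofReal (setIntegral_nonneg hE fun x _ => (exp_pos _).le)]

theorem isProbabilityMeasure_withLogDensity (hX : Integrable (fun x => exp (X x)) ν)
    (hX1 : ∫ x, exp (X x) ∂ν = 1) : IsProbabilityMeasure (ν.withLogDensity X) := by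
  constructor
  rw [Measure.withLogDensity, withDensity_apply _ MeasurableSet.univ, Measure.restrict_univ,
    ← ofReal_integral_eq_lintegral_ofReal hX (ae_of_all _ fun x => (exp_pos _).le), hX1,
    ENNReal.ofReal_one]

/-- The left side is `KL(ν.withLogDensity X ‖ ν)`. It is at most `∫ (e^X - 1) X dν` because
`∫ X dν ≤ ∫ (e^X - 1) dν = 0`. -/
theorem integral_withLogDensity_le [IsProbabilityMeasure ν] (hXm : Measurable X)
    (hX : ∀ x, |X x| ≤ ε) (hX1 : ∫ x, exp (X x) ∂ν = 1) :
    ∫ x, X x ∂ν.withLogDensity X ≤ ε * (exp ε - 1) := by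
  have hXi : Integrable X ν := .of_bound hXm.aestronglyMeasurable ε (ae_of_all _ hX)
  have hexpi : Integrable (fun x => exp (X x)) ν := integrable_exp_of_abs_le hXm hX
  have hloss : Integrable (fun x => (exp (X x) - 1) * X x) ν := by
    refine .of_bound (by fun_prop) (ε * (exp ε - 1)) (ae_of_all _ fun x => ?_)
    have : 0 ≤ (exp (X x) - 1) * X x := by
      rcases le_total 0 (X x) with h | h
      · exact mul_nonneg (sub_nonneg.2 (one_le_exp h)) h
      · exact mul_nonneg_of_nonpos_of_nonpos (sub_nonpos.2 (exp_le_one_iff.2 h)) h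
    rw [Real.norm_eq_abs, abs_of_nonneg this]
    exact exp_sub_one_mul_self_le (hX x)
  have hmean : ∫ x, X x ∂ν ≤ 0 :=
    calc ∫ x, X x ∂ν ≤ ∫ x, (exp (X x) - 1) ∂ν :=
          integral_mono hXi (hexpi.sub (integrable_const 1)) fun x => by
            linarith [add_one_le_exp (X x)]
      _ = 0 := by rw [integral_sub hexpi (integrable_const 1), hX1]; simp
  rw [Measure.withLogDensity, integral_withDensity_eq_integral_toReal_smul (by fun_prop)
    (ae_of_all _ fun _ => ENNReal.ofReal_lt_top)]
  simp only [ENNReal.toReal_ofReal (exp_pos _).le, smul_eq_mul]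
  calc ∫ x, exp (X x) * X x ∂ν = ∫ x, ((exp (X x) - 1) * X x + X x) ∂ν := by
        congr with x; ring
    _ = ∫ x, (exp (X x) - 1) * X x ∂ν + ∫ x, X x ∂ν := integral_add hloss hXi
    _ ≤ ∫ _x, ε * (exp ε - 1) ∂ν + 0 :=
        add_le_add
          (integral_mono hloss (integrable_const _) fun x => exp_sub_one_mul_self_le (hX x)) hmean
    _ = ε * (exp ε - 1) := by simp

theorem measureReal_withLogDensity_inter_le [IsFiniteMeasure ν] (c : ℝ) (E : Set Ω) :
    (ν.withLogDensity X).real (E ∩ {x | X x ≤ c}) ≤ exp c * ν.real E := by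
  have : ν.withLogDensity X (E ∩ {x | X x ≤ c}) ≤ ENNReal.ofReal (exp c) * ν E :=
    calc ν.withLogDensity X (E ∩ {x | X x ≤ c})
        = ∫⁻ x in E ∩ {x | X x ≤ c}, ENNReal.ofReal (exp (X x)) ∂ν := withDensity_apply' _ _
      _ ≤ ∫⁻ _x in E ∩ {x | X x ≤ c}, ENNReal.ofReal (exp c) ∂ν :=
          setLIntegral_mono measurable_const fun x hx =>
            ENNReal.ofReal_le_ofReal (exp_le_exp.mpr hx.2)
      _ ≤ ENNReal.ofReal (exp c) * ν E := by
          rw [setLIntegral_const]; gcongr; exact inter_subset_left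
  simpa [measureReal_def, ENNReal.toReal_mul, (exp_pos c).le]
    using ENNReal.toReal_mono (by finiteness) this

end LogDensity

theorem sub_max_min_le_max_sub (l p u : ℝ) : p - max l (min p u) ≤ max (p - u) 0 := by
  rcases min_choice p u with h | h <;> rw [h] <;> grind

theorem max_min_sub_le_max_sub (l p u : ℝ) : max l (min p u) - p ≤ max (l - p) 0 := by
  rcases min_choice p u with h | h <;> rw [h] <;> grind

section Decomposition

variable {Ω : Type*} [MeasurableSpace Ω]

theorem integral_max_zero_le_of_setIntegral_le {μ : Measure Ω} {g : Ω → ℝ} (hgm : Measurable g)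
    {γ : ℝ} (h : ∀ E, MeasurableSet E → ∫ x in E, g x ∂μ ≤ γ) : ∫ x, max (g x) 0 ∂μ ≤ γ := by
  have hS : MeasurableSet {x | 0 ≤ g x} := measurableSet_le measurable_const hgm
  have : (fun x => max (g x) 0) = {x | 0 ≤ g x}.indicator g := by
    ext x
    by_cases hx : 0 ≤ g x
    · simp [hx]
    · simp [hx, (not_le.mp hx).le]
  rw [this, integral_indicator hS]
  exact h _ hS

theorem integral_max_sub_zero_comm {μ : Measure Ω} {p f : Ω → ℝ} (hp : Integrable p μ)
    (hf : Integrable f μ) (h : ∫ x, p x ∂μ = ∫ x, f x ∂μ) :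
    ∫ x, max (p x - f x) 0 ∂μ = ∫ x, max (f x - p x) 0 ∂μ := by
  have hpf : ∀ x, max (p x - f x) 0 = max (f x - p x) 0 + (p x - f x) := fun x => by
    rcases le_total (p x) (f x) with h | h
    · simp [max_eq_right (sub_nonpos.2 h), max_eq_left (sub_nonneg.2 h)]
    · simp [max_eq_left (sub_nonneg.2 h), max_eq_right (sub_nonpos.2 h)]
  have hfp : Integrable (fun x => max (f x - p x) 0) μ := (hf.sub hp).pos_part
  have hpf' : Integrable (fun x => p x - f x) μ := hp.sub hf
  rw [integral_congr_ae (ae_of_all _ hpf), integral_add hfp hpf', integral_sub hp hf, h,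
    sub_self, add_zero]

theorem exists_forall_mem_uIcc_integral_eq {μ : Measure Ω} {d h : Ω → ℝ} (hdm : Measurable d)
    (hhm : Measurable h) (hdi : Integrable d μ) (hhi : Integrable h μ) {v : ℝ}
    (hv : v ∈ uIcc (∫ x, d x ∂μ) (∫ x, h x ∂μ)) :
    ∃ f : Ω → ℝ, Measurable f ∧ Integrable f μ ∧ (∀ x, f x ∈ uIcc (d x) (h x)) ∧
      ∫ x, f x ∂μ = v := by
  rw [← segment_eq_uIcc, segment_eq_image'] at hv
  obtain ⟨θ, hθ, rfl⟩ := hv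
  have hθi : Integrable (fun x => θ * (h x - d x)) μ := (hhi.sub hdi).const_mul θ
  refine ⟨fun x => d x + θ * (h x - d x), by fun_prop, hdi.add hθi, fun x => ?_, ?_⟩
  · rw [← segment_eq_uIcc, segment_eq_image']
    exact ⟨θ, hθ, rfl⟩
  · simp only [smul_eq_mul]
    rw [integral_add hdi hθi, integral_const_mul, integral_sub hhi hdi]

/-- Clamping `p` into the band `[a' q, a q]` moves at most `γ` mass in each direction; moving the
clamped density towards one edge of the band then restores total mass one. -/
theorem exists_density_mem_band {ρ : Measure Ω} {p q : Ω → ℝ} (hpm : Measurable p)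
    (hqm : Measurable q) (hpi : Integrable p ρ) (hqi : Integrable q ρ) (hq0 : ∀ x, 0 ≤ q x)
    (hp1 : ∫ x, p x ∂ρ = 1) (hq1 : ∫ x, q x ∂ρ = 1) {a' a γ : ℝ} (ha' : a' ≤ 1) (ha : 1 ≤ a)
    (hP : ∫ x, max (p x - a * q x) 0 ∂ρ ≤ γ) (hQ : ∫ x, max (a' * q x - p x) 0 ∂ρ ≤ γ) :
    ∃ f : Ω → ℝ, Measurable f ∧ Integrable f ρ ∧ (∀ x, a' * q x ≤ f x ∧ f x ≤ a * q x) ∧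
      ∫ x, f x ∂ρ = 1 ∧ ∫ x, max (p x - f x) 0 ∂ρ ≤ γ := by
  set d := fun x => max (a' * q x) (min (p x) (a * q x))
  have hdm : Measurable d := by fun_prop
  have hdi : Integrable d ρ := (hqi.const_mul a').sup (hpi.inf (hqi.const_mul a))
  have hd : ∀ x, a' * q x ≤ d x ∧ d x ≤ a * q x := fun x =>
    ⟨le_max_left _ _, max_le (by nlinarith [hq0 x]) (min_le_right _ _)⟩
  have hPi : Integrable (fun x => max (p x - a * q x) 0) ρ := (hpi.sub (hqi.const_mul a)).pos_part
  have hQi : Integrable (fun x => max (a' * q x - p x) 0) ρ :=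
    ((hqi.const_mul a').sub hpi).pos_part
  rcases le_total (∫ x, d x ∂ρ) 1 with hle | hge
  · obtain ⟨f, hfm, hfi, hf, hf1⟩ := exists_forall_mem_uIcc_integral_eq hdm (hqm.const_mul a) hdi
      (hqi.const_mul a) (v := 1)
      (by rw [integral_const_mul, hq1, mul_one]; exact mem_uIcc_of_le hle ha)
    have hf : ∀ x, d x ≤ f x ∧ f x ≤ a * q x := fun x => by
      simpa [uIcc_of_le (hd x).2] using hf x
    refine ⟨f, hfm, hfi, fun x => ⟨(hd x).1.trans (hf x).1, (hf x).2⟩, hf1, ?_⟩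
    refine le_trans (integral_mono (hpi.sub hfi).pos_part hPi fun x => ?_) hP
    exact max_le (by linarith [sub_max_min_le_max_sub (a' * q x) (p x) (a * q x), (hf x).1])
      (le_max_right _ _)
  · obtain ⟨f, hfm, hfi, hf, hf1⟩ := exists_forall_mem_uIcc_integral_eq hdm (hqm.const_mul a') hdi
      (hqi.const_mul a') (v := 1)
      (by rw [integral_const_mul, hq1, mul_one]; exact mem_uIcc_of_ge ha' hge)
    have hf : ∀ x, a' * q x ≤ f x ∧ f x ≤ d x := fun x => by
      simpa [uIcc_of_ge (hd x).1] using hf x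
    refine ⟨f, hfm, hfi, fun x => ⟨(hf x).1, (hf x).2.trans (hd x).2⟩, hf1, ?_⟩
    rw [integral_max_sub_zero_comm hpi hfi (hp1.trans hf1.symm)]
    refine le_trans (integral_mono (hfi.sub hpi).pos_part hQi fun x => ?_) hQ
    exact max_le (by linarith [max_min_sub_le_max_sub (a' * q x) (p x) (a * q x), (hf x).2])
      (le_max_right _ _)

theorem ApproxDominated.integral_max_rnDeriv_sub_le {μ ν ρ : Measure Ω} [IsFiniteMeasure μ]
    [IsFiniteMeasure ν] [SigmaFinite ρ] (hμρ : μ ≪ ρ) (hνρ : ν ≪ ρ) {ε γ : ℝ}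
    (h : ApproxDominated ε γ μ ν) :
    ∫ x, max ((μ.rnDeriv ρ x).toReal - exp ε * (ν.rnDeriv ρ x).toReal) 0 ∂ρ ≤ γ := by
  refine integral_max_zero_le_of_setIntegral_le (by fun_prop) fun E hE => ?_
  rw [integral_sub Measure.integrable_toReal_rnDeriv.integrableOn
    (Measure.integrable_toReal_rnDeriv.const_mul _).integrableOn, integral_const_mul,
    Measure.setIntegral_toReal_rnDeriv hμρ, Measure.setIntegral_toReal_rnDeriv hνρ]
  linarith [h E hE]

theorem exists_logDensity_of_mem_band {ν ρ : Measure Ω} [SigmaFinite ν] [SigmaFinite ρ]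
    (hνρ : ν ≪ ρ) {f : Ω → ℝ} (hfm : Measurable f) {ε : ℝ} (hε : 0 ≤ ε)
    (hf : ∀ x, exp (-ε) * (ν.rnDeriv ρ x).toReal ≤ f x ∧ f x ≤ exp ε * (ν.rnDeriv ρ x).toReal) :
    ∃ X : Ω → ℝ, Measurable X ∧ (∀ x, |X x| ≤ ε) ∧
      ∀ E, MeasurableSet E → ∫ x in E, exp (X x) ∂ν = ∫ x in E, f x ∂ρ := by
  set q := fun x => (ν.rnDeriv ρ x).toReal
  have hq0 : ∀ x, 0 ≤ q x := fun x => ENNReal.toReal_nonneg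
  replace hf : ∀ x, exp (-ε) * q x ≤ f x ∧ f x ≤ exp ε * q x := hf
  -- where `q x = 0` the band forces `f x = 0`, so the junk value `log (0 / 0) = 0` is harmless
  refine ⟨fun x => log (f x / q x), by fun_prop, fun x => ?_, fun E hE => ?_⟩
  · rcases (hq0 x).eq_or_lt with hq | hq
    · show |log (f x / q x)| ≤ ε
      rw [← hq, div_zero, log_zero, abs_zero]
      exact hε
    have hfq : 0 < f x / q x := div_pos ((mul_pos (exp_pos _) hq).trans_le (hf x).1) hq
    refine abs_le.2 ⟨(le_log_iff_exp_le hfq).2 ?_, (log_le_iff_le_exp hfq).2 ?_⟩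
    · rw [le_div_iff₀ hq]; exact (hf x).1
    · rw [div_le_iff₀ hq]; exact (hf x).2
  · rw [← setIntegral_toReal_rnDeriv_mul hνρ hE]
    congr with x
    show q x * exp (log (f x / q x)) = f x
    rcases (hq0 x).eq_or_lt with hq | hq
    · have := hf x
      rw [← hq, mul_zero] at this
      rw [← hq, zero_mul]
      linarith [this.1, this.2]
    · have hfq : 0 < f x / q x := div_pos ((mul_pos (exp_pos _) hq).trans_le (hf x).1) hq
      rw [exp_log hfq, mul_div_cancel₀ _ hq.ne']

theorem ApproxDominated.exists_logDensity {μ ν : Measure Ω} [IsProbabilityMeasure μ]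
    [IsProbabilityMeasure ν] {ε γ : ℝ} (hε : 0 ≤ ε) (hμν : ApproxDominated ε γ μ ν)
    (hνμ : ApproxDominated ε γ ν μ) :
    ∃ X : Ω → ℝ, Measurable X ∧ (∀ x, |X x| ≤ ε) ∧ ∫ x, exp (X x) ∂ν = 1 ∧
      ∀ E, MeasurableSet E → μ.real E ≤ (ν.withLogDensity X).real E + γ := by
  set ρ := μ + ν
  have hμρ : μ ≪ ρ := Measure.AbsolutelyContinuous.rfl.add_right ν
  have hνρ : ν ≪ ρ := Measure.AbsolutelyContinuous.rfl.add_right' μ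
  set p := fun x => (μ.rnDeriv ρ x).toReal
  set q := fun x => (ν.rnDeriv ρ x).toReal
  have hpi : Integrable p ρ := Measure.integrable_toReal_rnDeriv
  have hpE : ∀ E, ∫ x in E, p x ∂ρ = μ.real E := Measure.setIntegral_toReal_rnDeriv hμρ
  have hQ : ∫ x, max (exp (-ε) * q x - p x) 0 ∂ρ ≤ γ := by
    have hscale : ∀ x, max (exp (-ε) * q x - p x) 0 = exp (-ε) * max (q x - exp ε * p x) 0 :=
      fun x => by
        rw [mul_max_of_nonneg _ _ (exp_pos _).le, mul_sub, ← mul_assoc, ← exp_add,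
          neg_add_cancel, exp_zero, one_mul, mul_zero]
    rw [integral_congr_ae (ae_of_all _ hscale), integral_const_mul]
    calc exp (-ε) * ∫ x, max (q x - exp ε * p x) 0 ∂ρ ≤ exp (-ε) * γ := by
          gcongr; exact hνμ.integral_max_rnDeriv_sub_le hνρ hμρ
      _ ≤ γ := mul_le_of_le_one_left hμν.nonneg (exp_le_one_iff.2 (by linarith))
  obtain ⟨f, hfm, hfi, hf, hf1, hpf⟩ := exists_density_mem_band (by fun_prop) (by fun_prop) hpi
    Measure.integrable_toReal_rnDeriv (fun _ => ENNReal.toReal_nonneg) (by simpa using hpE univ)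
    (by simpa using Measure.setIntegral_toReal_rnDeriv hνρ univ) (exp_le_one_iff.2 (by linarith))
    (one_le_exp hε) (hμν.integral_max_rnDeriv_sub_le hμρ hνρ) hQ
  obtain ⟨X, hXm, hX, hXE⟩ := exists_logDensity_of_mem_band hνρ hfm hε hf
  refine ⟨X, hXm, hX, by simpa [hf1] using hXE univ .univ, fun E hE => ?_⟩
  rw [measureReal_withLogDensity (integrable_exp_of_abs_le hXm hX) hE, hXE E hE, ← hpE E]
  have hpfi : Integrable (fun x => p x - f x) ρ := hpi.sub hfi
  calc ∫ x in E, p x ∂ρ = ∫ x in E, f x ∂ρ + ∫ x in E, (p x - f x) ∂ρ := by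
        rw [integral_sub hpi.integrableOn hfi.integrableOn]; ring
    _ ≤ ∫ x in E, f x ∂ρ + ∫ x, max (p x - f x) 0 ∂ρ := by
        gcongr
        exact (setIntegral_mono hpfi.integrableOn hpfi.pos_part.integrableOn
          fun x => le_max_left _ _).trans
          (setIntegral_le_integral hpfi.pos_part (ae_of_all _ fun x => le_max_right _ _))
    _ ≤ ∫ x in E, f x ∂ρ + γ := by gcongr

end Decomposition

section Product

variable {ι : Type*} [Fintype ι] {O : ι → Type*} [∀ i, MeasurableSpace (O i)]

theorem MeasureTheory.Measure.pi_withDensity (ν : ∀ i, Measure (O i))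
    [∀ i, IsProbabilityMeasure (ν i)] {f : ∀ i, O i → ℝ≥0∞} (hf : ∀ i, Measurable (f i))
    [∀ i, SigmaFinite ((ν i).withDensity (f i))] :
    Measure.pi (fun i => (ν i).withDensity (f i))
      = (Measure.pi ν).withDensity (fun x => ∏ i, f i (x i)) := by
  classical
  refine pi_eq fun s hs => ?_
  have hbox : (univ.pi s).indicator (fun x => ∏ i, f i (x i))
      = fun x => ∏ i, (s i).indicator (f i) (x i) := by
    ext x
    by_cases hx : x ∈ univ.pi s
    · simp_all [indicator_of_mem]
    · obtain ⟨i, -, hi⟩ : ∃ i ∈ univ, x i ∉ s i := by simpa [mem_pi] using hx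
      rw [indicator_of_notMem hx, Finset.prod_eq_zero (Finset.mem_univ i)]
      exact indicator_of_notMem hi _
  rw [withDensity_apply _ (MeasurableSet.univ_pi hs), ← lintegral_indicator (.univ_pi hs), hbox,
    lintegral_prod_eq_prod_lintegral_of_indepFun _ _
      (iIndepFun_pi fun i => ((hf i).indicator (hs i)).aemeasurable)
      fun i => ((hf i).indicator (hs i)).comp (measurable_pi_apply i)]
  refine Finset.prod_congr rfl fun i _ => ?_
  rw [withDensity_apply _ (hs i), ← lintegral_indicator (hs i),
    (measurePreserving_eval ν i).lintegral_comp ((hf i).indicator (hs i))]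

theorem MeasureTheory.Measure.pi_withLogDensity (ν : ∀ i, Measure (O i))
    [∀ i, IsProbabilityMeasure (ν i)] {X : ∀ i, O i → ℝ} (hXm : ∀ i, Measurable (X i))
    [∀ i, SigmaFinite ((ν i).withLogDensity (X i))] :
    Measure.pi (fun i => (ν i).withLogDensity (X i))
      = (Measure.pi ν).withLogDensity fun x => ∑ i, X i (x i) := by
  have : ∀ i, SigmaFinite ((ν i).withDensity fun x => ENNReal.ofReal (exp (X i x))) := ‹_›
  simp only [withLogDensity]
  rw [pi_withDensity ν fun i => (hXm i).exp.ennreal_ofReal]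
  congr with x
  rw [exp_sum, ENNReal.ofReal_prod_of_nonneg fun i _ => (exp_pos _).le]

theorem measureReal_pi_sum_sub_integral_ge_le (μ : ∀ i, Measure (O i))
    [∀ i, IsProbabilityMeasure (μ i)] {X : ∀ i, O i → ℝ} (hX : ∀ i, Measurable (X i)) {B : ℝ}
    (hXB : ∀ i x, |X i x| ≤ B) {t : ℝ} (ht : 0 ≤ t) :
    (Measure.pi μ).real {x | t ≤ ∑ i, (X i (x i) - ∫ y, X i y ∂μ i)}
      ≤ exp (-t ^ 2 / (2 * (Fintype.card ι * B ^ 2))) := by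
  have hsub : ∀ i, HasSubgaussianMGF (fun x => X i (x i) - ∫ y, X i y ∂μ i)
      ((‖B - -B‖₊ / 2) ^ 2) (Measure.pi μ) := fun i => by
    rw [← integral_comp_eval (hX i).aestronglyMeasurable]
    exact hasSubgaussianMGF_of_mem_Icc ((hX i).comp (measurable_pi_apply i)).aemeasurable
      (ae_of_all _ fun x => abs_le.mp (hXB i (x i)))
  have hind : iIndepFun (fun i x => X i (x i) - ∫ y, X i y ∂μ i) (Measure.pi μ) :=
    iIndepFun_pi fun i => ((hX i).sub_const _).aemeasurable
  convert HasSubgaussianMGF.measure_sum_ge_le_of_iIndepFun hind (s := Finset.univ)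
    (fun i _ => hsub i) ht using 4
  push_cast [Finset.sum_const, Finset.card_univ, coe_nnnorm, Real.norm_eq_abs, nsmul_eq_mul]
  rw [div_pow, sq_abs]
  ring

variable (ν : ∀ i, Measure (O i)) [∀ i, IsProbabilityMeasure (ν i)] {X : ∀ i, O i → ℝ}
  {ε γ : ℝ}

theorem measureReal_pi_withLogDensity_sum_gt_le (hXm : ∀ i, Measurable (X i)) (hε : 0 ≤ ε)
    (hX : ∀ i x, |X i x| ≤ ε) (hX1 : ∀ i, ∫ x, exp (X i x) ∂ν i = 1) (hγ0 : 0 < γ)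
    (hγ1 : γ ≤ 1) :
    (Measure.pi fun i => (ν i).withLogDensity (X i)).real
        {x | √(2 * log (1 / γ) * Fintype.card ι) * ε + Fintype.card ι * ε * (exp ε - 1)
          < ∑ i, X i (x i)} ≤ γ := by
  have := fun i => isProbabilityMeasure_withLogDensity (integrable_exp_of_abs_le (hXm i) (hX i))
    (hX1 i)
  set N : ℝ := (Fintype.card ι : ℝ)
  set t := √(2 * log (1 / γ) * N) * ε
  rcases eq_or_ne (N * ε ^ 2) 0 with hdeg | hdeg
  · have hc : N * ε ≤ t + N * ε * (exp ε - 1) := by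
      rcases mul_eq_zero.1 hdeg with h | h
      · simp [t, h]
      · simp [t, pow_eq_zero_iff two_ne_zero |>.1 h]
    have hempty : {x : ∀ i, O i | t + N * ε * (exp ε - 1) < ∑ i, X i (x i)} = ∅ :=
      eq_empty_of_forall_notMem fun x hx => not_le.2 hx <| hc.trans' <|
        (Finset.sum_le_sum fun i _ => (le_abs_self _).trans (hX i (x i))).trans (by simp [N])
    simp [hempty, hγ0.le]
  have hmean : ∑ i, ∫ y, X i y ∂(ν i).withLogDensity (X i) ≤ N * ε * (exp ε - 1) :=
    calc ∑ i, ∫ y, X i y ∂(ν i).withLogDensity (X i) ≤ ∑ _i : ι, ε * (exp ε - 1) :=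
          Finset.sum_le_sum fun i _ => integral_withLogDensity_le (hXm i) (hX i) (hX1 i)
      _ = N * ε * (exp ε - 1) := by simp [N, mul_assoc]
  have hsub : {x : ∀ i, O i | t + N * ε * (exp ε - 1) < ∑ i, X i (x i)}
      ⊆ {x | t ≤ ∑ i, (X i (x i) - ∫ y, X i y ∂(ν i).withLogDensity (X i))} :=
    fun x hx => by
      replace hx : t + N * ε * (exp ε - 1) < ∑ i, X i (x i) := hx
      show t ≤ _
      rw [Finset.sum_sub_distrib]
      linarith
  have hL : 0 ≤ log (1 / γ) := log_nonneg (by rw [le_div_iff₀ hγ0]; linarith)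
  have hexp : -t ^ 2 / (2 * (N * ε ^ 2)) = log γ := by
    obtain ⟨hN, hε2⟩ := mul_ne_zero_iff.1 hdeg
    have hε0 : ε ≠ 0 := (pow_ne_zero_iff two_ne_zero).1 hε2
    rw [mul_pow, sq_sqrt (by positivity), one_div, log_inv]
    field_simp
  calc _ ≤ _ := measureReal_mono hsub
    _ ≤ exp (-t ^ 2 / (2 * (N * ε ^ 2))) :=
        measureReal_pi_sum_sub_integral_ge_le _ hXm hX (by positivity)
    _ = γ := by rw [hexp, exp_log hγ0]

theorem approxDominated_pi_withLogDensity (hXm : ∀ i, Measurable (X i)) (hε : 0 ≤ ε)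
    (hX : ∀ i x, |X i x| ≤ ε) (hX1 : ∀ i, ∫ x, exp (X i x) ∂ν i = 1) (hγ0 : 0 < γ)
    (hγ1 : γ ≤ 1) :
    ApproxDominated
      (√(2 * log (1 / γ) * Fintype.card ι) * ε + Fintype.card ι * ε * (exp ε - 1)) γ
      (Measure.pi fun i => (ν i).withLogDensity (X i)) (Measure.pi ν) := by
  intro E _
  have := fun i => isProbabilityMeasure_withLogDensity (integrable_exp_of_abs_le (hXm i) (hX i))
    (hX1 i)
  set c := √(2 * log (1 / γ) * Fintype.card ι) * ε + Fintype.card ι * ε * (exp ε - 1)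
  set S := {x : ∀ i, O i | ∑ i, X i (x i) ≤ c}
  have hbulk := measureReal_withLogDensity_inter_le (ν := Measure.pi ν)
    (X := fun x => ∑ i, X i (x i)) c E
  rw [← Measure.pi_withLogDensity ν hXm] at hbulk
  have hSc : E ∩ Sᶜ ⊆ {x | c < ∑ i, X i (x i)} := fun x hx =>
    show c < _ from not_le.1 hx.2
  have htail : (Measure.pi fun i => (ν i).withLogDensity (X i)).real (E ∩ Sᶜ) ≤ γ :=
    (measureReal_mono hSc).trans
      (measureReal_pi_withLogDensity_sum_gt_le ν hXm hε hX hX1 hγ0 hγ1)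
  calc _ ≤ _ := measureReal_mono (inter_union_compl E S).ge
    _ ≤ _ := measureReal_union_le _ _
    _ ≤ exp c * (Measure.pi ν).real E + γ := add_le_add hbulk htail

end Product

theorem ApproxDominated.pi {k : ℕ} {O : Fin k → Type*} [∀ i, MeasurableSpace (O i)]
    {μ ν : ∀ i, Measure (O i)} [∀ i, IsProbabilityMeasure (μ i)] [∀ i, IsProbabilityMeasure (ν i)]
    {ε : ℝ} (hε : 0 ≤ ε) {γs : Fin k → ℝ} (hμν : ∀ i, ApproxDominated ε (γs i) (μ i) (ν i))
    (hνμ : ∀ i, ApproxDominated ε (γs i) (ν i) (μ i)) {γ : ℝ} (hγ0 : 0 < γ) (hγ1 : γ ≤ 1) :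
    ApproxDominated (√(2 * log (1 / γ) * k) * ε + k * ε * (exp ε - 1)) (γ + ∑ i, γs i)
      (Measure.pi μ) (Measure.pi ν) := by
  choose X hXm hX hX1 hμX using fun i => (hμν i).exists_logDensity hε (hνμ i)
  have := fun i => isProbabilityMeasure_withLogDensity (integrable_exp_of_abs_le (hXm i) (hX i))
    (hX1 i)
  have hpure := approxDominated_pi_withLogDensity ν hXm hε hX hX1 hγ0 hγ1
  rw [Fintype.card_fin] at hpure
  have hγs : ∀ i, 0 ≤ γs i := fun i => (hμν i).nonneg
  have hγsum : 0 ≤ ∑ i, γs i := Finset.sum_nonneg fun i _ => hγs i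
  intro E hE
  have hsum := Measure.pi_apply_le_add_sum (μ := μ) (μ' := fun i => (ν i).withLogDensity (X i))
    (δ := fun i => ENNReal.ofReal (γs i)) (fun i E hE => by
      rw [← ofReal_measureReal, ← ofReal_measureReal,
        ← ENNReal.ofReal_add measureReal_nonneg (hγs i)]
      exact ENNReal.ofReal_le_ofReal (hμX i E hE)) hE
  rw [← ENNReal.ofReal_sum_of_nonneg fun i _ => hγs i, ← ofReal_measureReal, ← ofReal_measureReal,
    ← ENNReal.ofReal_add measureReal_nonneg hγsum,
    ENNReal.ofReal_le_ofReal_iff (add_nonneg measureReal_nonneg hγsum)] at hsum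
  linarith [hpure E hE]

theorem diffPrivate_advanced_comp_general {T : Type*} {n k : ℕ}
    {O : Fin k → Type*} [∀ i, MeasurableSpace (O i)]
    (M : ∀ i : Fin k, (Fin n → T) → Measure (O i))
    (hprob : ∀ i D, IsProbabilityMeasure (M i D))
    (ε' : ℝ) (hε' : 0 ≤ ε')
    (εs γs : Fin k → ℝ)
    (hεs : ∀ i, εs i ≤ ε')
    (hDP : ∀ i, DiffPrivate (εs i) (γs i) (M i))
    (γ : ℝ) (hγ0 : 0 < γ) (hγ1 : γ ≤ 1) :
    DiffPrivate (Real.sqrt (2 * Real.log (1 / γ) * k) * ε' + k * ε' * (Real.exp ε' - 1))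
      (γ + ∑ i, γs i)
      (fun D => Measure.pi (fun i => M i D)) := by
  have hε : 0 ≤ √(2 * log (1 / γ) * k) * ε' + k * ε' * (exp ε' - 1) :=
    add_nonneg (mul_nonneg (sqrt_nonneg _) hε')
      (mul_nonneg (by positivity) (sub_nonneg.2 (one_le_exp hε')))
  refine diffPrivate_of_approxDominated hε fun D i t => ?_
  have := hprob
  exact ApproxDominated.pi hε' (fun j => ((hDP j).approxDominated D i t).1.mono (hεs j))
    (fun j => ((hDP j).approxDominated D i t).2.mono (hεs j)) hγ0 hγ1

/-- **Advanced composition (Dwork–Rothblum–Vadhan).**  Let `M¹,…,M^k` be families of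
probability distributions, each `M^i` being `(ε_i,γ_i)`-differentially private with
`ε_i ≤ ε'`.  Then for any `γ ∈ (0,1]`, the composed mechanism
`D ↦ (M¹_D, …, M^k_D)` (an independent tuple of samples from the `k` mechanisms on the
same input) is `(ε, γ + ∑ i, γ_i)`-differentially private for
`ε = √(2·log(1/γ)·k)·ε' + k·ε'·(e^{ε'} − 1)`. -/
theorem diffPrivate_advanced_comp {T : Type*} {n k : ℕ}
    {O : Fin k → Type*} [∀ i, MeasurableSpace (O i)]
    (M : ∀ i : Fin k, (Fin n → T) → Measure (O i))
    (hprob : ∀ i D, IsProbabilityMeasure (M i D))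
    (ε' : ℝ) (hε' : 0 ≤ ε')
    (εs γs : Fin k → ℝ) (hεs0 : ∀ i, 0 ≤ εs i) (hγs0 : ∀ i, 0 ≤ γs i)
    (hεs : ∀ i, εs i ≤ ε')
    (hDP : ∀ i, DiffPrivate (εs i) (γs i) (M i))
    (γ : ℝ) (hγ0 : 0 < γ) (hγ1 : γ ≤ 1) :
    DiffPrivate (Real.sqrt (2 * Real.log (1 / γ) * k) * ε' + k * ε' * (Real.exp ε' - 1))
      (γ + ∑ i, γs i)
      (fun D => Measure.pi (fun i => M i D)) :=
  diffPrivate_advanced_comp_general M hprob ε' hε' εs γs hεs hDP γ hγ0 hγ1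
end

section
/- Let f : T^n → ℝ have L¹ sensitivity s (for every t ∈ T^n, i ≤ n, and t' ∈ T: |f(t) − f(t', t_{−i})| ≤ s) and let ε > 0. Then the Laplace mechanism that, on input t, outputs f(t) + Z where Z is drawn from the Laplace distribution with density (ε/(2s))·exp(−ε|z|/s) on ℝ, is (ε, 0)-differentially private: for every pair of inputs t, t' differing in a single coordinate and every measurable event E ⊆ ℝ, M_t(E) ≤ exp(ε)·M_{t'}(E). -/
open MeasureTheory

/-- The Laplace distribution on `ℝ` with scale `b`, given by density `(1/(2b))·exp(-|z|/b)`. -/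
noncomputable def laplaceMeasure (b : ℝ) : Measure ℝ :=
  volume.withDensity fun z => ENNReal.ofReal ((1 / (2 * b)) * Real.exp (-|z| / b))

/-- The Laplace mechanism: on input `t`, output `f t + Z` with `Z` Laplace with scale `s/ε`,
i.e. with density `(ε/(2s))·exp(-ε|z|/s)`. -/
noncomputable def laplaceMech {T : Type*} {n : ℕ} (f : (Fin n → T) → ℝ) (s ε : ℝ)
    (t : Fin n → T) : Measure ℝ :=
  Measure.map (fun z => f t + z) (laplaceMeasure (s / ε))

/-!
Shifting the argument of the Laplace density `(1/(2b))·exp(-|z|/b)` by `c` changes it by a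
factor at most `exp(|c|/b)` (triangle inequality). Translating the output by
`|f t - f t'| ≤ s` therefore changes the probability of every event by a factor at most
`exp(s/b) = exp ε`.
-/

open Real Set ENNReal

theorem map_add_left_withDensity_le_mul {G : Type*} [MeasurableSpace G] [AddCommGroup G]
    [MeasurableAdd G] {μ : Measure G} [μ.IsAddRightInvariant] {g : G → ℝ≥0∞}
    (hg : Measurable g) {C : ℝ≥0∞} {a a' : G} (hC : ∀ z, g z ≤ C * g (z + (a - a')))
    {E : Set G} (hE : MeasurableSet E) :
    (μ.withDensity g).map (a + ·) E ≤ C * (μ.withDensity g).map (a' + ·) E := by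
  have hEa := hE.preimage (measurable_const_add a)
  have hEa' := hE.preimage (measurable_const_add a')
  rw [Measure.map_apply (measurable_const_add a) hE,
    Measure.map_apply (measurable_const_add a') hE, withDensity_apply _ hEa,
    withDensity_apply _ hEa', ← lintegral_indicator hEa, ← lintegral_indicator hEa',
    ← lintegral_add_right_eq_self (((a' + ·) ⁻¹' E).indicator g) (a - a'),
    ← lintegral_const_mul C (f := fun z => ((a' + ·) ⁻¹' E).indicator g (z + (a - a')))
      ((hg.indicator hEa').comp (measurable_add_const _))]
  refine lintegral_mono fun z => ?_
  have hshift : a' + (z + (a - a')) = a + z := by abel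
  by_cases hz : a + z ∈ E
  · simpa [hz, hshift] using hC z
  · simp [hz]

theorem integrable_exp_neg_abs_div {b : ℝ} (hb : 0 < b) :
    Integrable fun z : ℝ => exp (-|z| / b) := by
  have hIoi : IntegrableOn (fun z : ℝ => exp (-|z| / b)) (Ioi 0) :=
    (exp_neg_integrableOn_Ioi 0 (inv_pos.2 hb)).congr_fun
      (fun z hz => by simp only [abs_of_pos (mem_Ioi.1 hz)]; ring_nf) measurableSet_Ioi
  have hIic : IntegrableOn (fun z : ℝ => exp (-|z| / b)) (Iic 0) := by
    have hIci : IntegrableOn (fun z : ℝ => exp (-|z| / b)) (Ici (-0)) := by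
      rw [neg_zero]
      exact Iff.mpr integrableOn_Ici_iff_integrableOn_Ioi hIoi
    simpa only [abs_neg] using hIci.comp_neg_Iic
  rw [← integrableOn_univ, ← Iic_union_Ioi (a := (0 : ℝ))]
  exact hIic.union hIoi

instance isFiniteMeasure_laplaceMeasure (b : ℝ) : IsFiniteMeasure (laplaceMeasure b) := by
  rcases le_or_gt b 0 with hb | hb
  -- for `b ≤ 0` the "density" is nonpositive, so the measure is zero
  · have hzero : laplaceMeasure b = 0 := by
      rw [laplaceMeasure, ← withDensity_zero]
      congr with z
      refine ENNReal.ofReal_of_nonpos (mul_nonpos_of_nonpos_of_nonneg ?_ (exp_pos _).le)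
      rw [one_div, inv_nonpos]
      linarith
    rw [hzero]
    infer_instance
  · exact isFiniteMeasure_withDensity_ofReal
      ((integrable_exp_neg_abs_div hb).const_mul _).hasFiniteIntegral

instance isFiniteMeasure_laplaceMech {T : Type*} {n : ℕ} (f : (Fin n → T) → ℝ) (s ε : ℝ)
    (t : Fin n → T) : IsFiniteMeasure (laplaceMech f s ε t) := by
  rw [laplaceMech]
  infer_instance

theorem laplace_density_le_exp_mul_shift {b : ℝ} (hb : 0 < b) (z c : ℝ) :
    1 / (2 * b) * exp (-|z| / b) ≤ exp (|c| / b) * (1 / (2 * b) * exp (-|z + c| / b)) := by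
  rw [mul_left_comm, ← exp_add]
  gcongr
  rw [← add_div, div_le_div_iff_of_pos_right hb]
  linarith [abs_add_le z c]

theorem laplaceMeasure_map_add_le {b : ℝ} (hb : 0 < b) (a a' : ℝ) {E : Set ℝ}
    (hE : MeasurableSet E) :
    (laplaceMeasure b).map (a + ·) E
      ≤ ENNReal.ofReal (exp (|a - a'| / b)) * (laplaceMeasure b).map (a' + ·) E := by
  refine map_add_left_withDensity_le_mul (by fun_prop) (fun z => ?_) hE
  rw [← ENNReal.ofReal_mul (exp_pos _).le]
  exact ENNReal.ofReal_le_ofReal (laplace_density_le_exp_mul_shift hb z _)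

/-- **The Laplace mechanism is `(ε,0)`-differentially private.**  If `f : T^n → ℝ` has
L¹ sensitivity `s` and `ε > 0`, then for every pair of inputs differing in a single
coordinate and every measurable event `E ⊆ ℝ`,
`M_t(E) ≤ exp(ε)·M_{t'}(E)`. -/
theorem laplaceMech_dp {T : Type*} {n : ℕ} (f : (Fin n → T) → ℝ) (s ε : ℝ)
    (hs : 0 < s) (hε : 0 < ε)
    (hsens : ∀ (t : Fin n → T) (i : Fin n) (t' : T),
      |f t - f (Function.update t i t')| ≤ s) :
    ∀ (t : Fin n → T) (i : Fin n) (t' : T) (E : Set ℝ), MeasurableSet E →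
      (laplaceMech f s ε t E).toReal
        ≤ Real.exp ε * (laplaceMech f s ε (Function.update t i t') E).toReal := by
  intro t i t' E hE
  have hscale : |f t - f (Function.update t i t')| / (s / ε) ≤ ε := by
    rw [div_div_eq_mul_div, div_le_iff₀ hs, mul_comm]
    gcongr
    exact hsens t i t'
  have hmeasure : laplaceMech f s ε t E
      ≤ ENNReal.ofReal (exp ε) * laplaceMech f s ε (Function.update t i t') E := by
    rw [laplaceMech, laplaceMech]
    exact (laplaceMeasure_map_add_le (div_pos hs hε) _ _ hE).trans (by gcongr)
  calc (laplaceMech f s ε t E).toReal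
      ≤ (ENNReal.ofReal (exp ε) * laplaceMech f s ε (Function.update t i t') E).toReal :=
        ENNReal.toReal_mono (mul_ne_top ofReal_ne_top (measure_ne_top _ _)) hmeasure
    _ = exp ε * (laplaceMech f s ε (Function.update t i t') E).toReal := by
        rw [toReal_mul, toReal_ofReal (exp_pos ε).le]
end
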